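/- arXiv:2502.03840 — 6 statements merged into one kernel-verified Lean document; each statement's English description precedes it below -/
import Mathlib

section
/- Lower dimensional restrictions of sub-relaxed junction functions are sub-relaxed: fix p ∈ ℝ^N and α ∈ {1,…,N}, and define F_0^{α,p} : ℝ → ℝ by F_0^{α,p}(q^α) = F_0(p^1,…,p^{α-1}, q^α, p^{α+1},…,p^N). If F_0 = R̲F_0 (sub-relaxed with respect to H = (H^1,…,H^N)), then F_0^{α,p} = R̲_{H^α} F_0^{α,p} (sub-relaxed with respect to the single Hamiltonian H^α). -/
open Set

noncomputable section

/-- Coercivity of a one-dimensional Hamiltonian: `h x → +∞` as `|x| → +∞`. -/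
def CoerciveHam (h : ℝ → ℝ) : Prop :=
  ∀ M : ℝ, ∃ R : ℝ, ∀ x : ℝ, R ≤ |x| → M ≤ h x

/-- Semi-coercivity of a junction function: `F p → +∞` as `min_α p α → -∞`. -/
def IsSemiCoercive {N : ℕ} (F : (Fin N → ℝ) → ℝ) : Prop :=
  ∀ M : ℝ, ∃ R : ℝ, ∀ p : Fin N → ℝ, (∃ α, p α ≤ R) → M ≤ F p

/-- `Hmin p = min_α H α (p α)`. -/
def Hmin {N : ℕ} (H : Fin N → ℝ → ℝ) (p : Fin N → ℝ) : ℝ := ⨅ α, H α (p α)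

/-- `Hmax p = max_α H α (p α)`. -/
def Hmax {N : ℕ} (H : Fin N → ℝ → ℝ) (p : Fin N → ℝ) : ℝ := ⨆ α, H α (p α)

/-- Sub-relaxation operator: `(R̲F)(p) = sup_{q ≥ p} min (F q) (Hmin q)`. -/
def Rsub {N : ℕ} (H : Fin N → ℝ → ℝ) (F : (Fin N → ℝ) → ℝ) (p : Fin N → ℝ) : ℝ :=
  sSup {v : ℝ | ∃ q : Fin N → ℝ, p ≤ q ∧ v = min (F q) (Hmin H q)}

/-- Super-relaxation operator: `(R̄F)(p) = inf_{q ≤ p} max (F q) (Hmax q)`. -/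
def Rsup {N : ℕ} (H : Fin N → ℝ → ℝ) (F : (Fin N → ℝ) → ℝ) (p : Fin N → ℝ) : ℝ :=
  sInf {v : ℝ | ∃ q : Fin N → ℝ, q ≤ p ∧ v = max (F q) (Hmax H q)}

/-- Godunov flux: `G(q,p) = max_{[p,q]} h` if `q ≥ p`, `min_{[q,p]} h` if `q ≤ p`. -/
def godunov (h : ℝ → ℝ) (q p : ℝ) : ℝ :=
  if p ≤ q then sSup (h '' Icc p q) else sInf (h '' Icc q p)

/-- `q` satisfies the lower Godunov relation for `F` at `p`: for every `α`, either
`q α = p α` and `F q ≤ H α (p α)`, or `q α > p α` and `F q = max_{[p α, q α]} H α`. -/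
def LowerGodunovRel {N : ℕ} (H : Fin N → ℝ → ℝ) (F : (Fin N → ℝ) → ℝ)
    (p q : Fin N → ℝ) : Prop :=
  ∀ α, (q α = p α ∧ F q ≤ H α (p α)) ∨
    (p α < q α ∧ F q = sSup ((H α) '' Icc (p α) (q α)))

/-- `q` satisfies the upper Godunov relation for `F` at `p`: for every `α`, either
`q α = p α` and `F q ≥ H α (p α)`, or `q α < p α` and `F q = min_{[q α, p α]} H α`. -/
def UpperGodunovRel {N : ℕ} (H : Fin N → ℝ → ℝ) (F : (Fin N → ℝ) → ℝ)
    (p q : Fin N → ℝ) : Prop :=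
  ∀ α, (q α = p α ∧ H α (p α) ≤ F q) ∨
    (q α < p α ∧ F q = sInf ((H α) '' Icc (q α) (p α)))

/-- Lower nonincreasing hull of `h`: `h₋ r = inf_{s ≤ r} h s`. -/
def lowerHull (h : ℝ → ℝ) (r : ℝ) : ℝ := sInf (h '' Iic r)

/-- `H₋ p = max_α (H α)₋ (p α)`. -/
def Hminus {N : ℕ} (H : Fin N → ℝ → ℝ) (p : Fin N → ℝ) : ℝ := ⨆ α, lowerHull (H α) (p α)

/-- `p` is a super-characteristic point of `F` (relative to `H`). -/
def SuperChar {N : ℕ} (H : Fin N → ℝ → ℝ) (F : (Fin N → ℝ) → ℝ) (p : Fin N → ℝ) : Prop :=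
  ∃ ε > (0 : ℝ), ∀ α, H α (p α) = F p ∧
    ∀ q : ℝ, p α < q → q < p α + ε → H α (p α) < H α q

/-- `p` is a sub-characteristic point of `F` (relative to `H`). -/
def SubChar {N : ℕ} (H : Fin N → ℝ → ℝ) (F : (Fin N → ℝ) → ℝ) (p : Fin N → ℝ) : Prop :=
  ∃ ε > (0 : ℝ), ∀ α, H α (p α) = F p ∧
    ∀ q : ℝ, p α - ε < q → q < p α → H α q < H α (p α)

/-- One-dimensional sub-relaxation with respect to a single Hamiltonian `h`. -/
def Rsub1 (h : ℝ → ℝ) (f : ℝ → ℝ) (x : ℝ) : ℝ :=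
  sSup {v : ℝ | ∃ r : ℝ, x ≤ r ∧ v = min (f r) (h r)}

theorem restriction_of_sub_relaxed_is_sub_relaxed
    (N : ℕ) (hN : 1 ≤ N)
    (H : Fin N → ℝ → ℝ)
    (hHcont : ∀ α, Continuous (H α))
    (hHcoer : ∀ α, CoerciveHam (H α))
    (F0 : (Fin N → ℝ) → ℝ)
    (hF0cont : Continuous F0)
    (hF0mono : Antitone F0)
    (hrelaxed : ∀ x : Fin N → ℝ, F0 x = Rsub H F0 x)
    (p : Fin N → ℝ) (α : Fin N) :
    ∀ t : ℝ,
      F0 (Function.update p α t)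
        = Rsub1 (H α) (fun s => F0 (Function.update p α s)) t := by
  intro t
  have hfanti : ∀ s r : ℝ, s ≤ r →
      F0 (Function.update p α r) ≤ F0 (Function.update p α s) := by
    intro s r hsr
    apply hF0mono
    intro β
    by_cases hβ : β = α
    · subst hβ; simp [hsr]
    · simp [Function.update_of_ne hβ]
  set T : Set ℝ :=
    {v : ℝ | ∃ r : ℝ, t ≤ r ∧ v = min (F0 (Function.update p α r)) (H α r)} with hT
  have hTne : T.Nonempty :=
    ⟨min (F0 (Function.update p α t)) (H α t), t, le_refl t, rfl⟩
  have hTub : ∀ v ∈ T, v ≤ F0 (Function.update p α t) := by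
    rintro v ⟨r, htr, rfl⟩
    exact le_trans (min_le_left _ _) (hfanti t r htr)
  have hBdd : BddAbove T := ⟨F0 (Function.update p α t), hTub⟩
  have hgoal : Rsub1 (H α) (fun s => F0 (Function.update p α s)) t = sSup T := rfl
  rw [hgoal]
  apply le_antisymm
  · rw [hrelaxed (Function.update p α t)]
    unfold Rsub
    refine csSup_le
      ⟨min (F0 (Function.update p α t)) (Hmin H (Function.update p α t)),
        Function.update p α t, le_refl _, rfl⟩ ?_
    rintro v ⟨q, hq, rfl⟩
    have hqα : t ≤ q α := by simpa using hq α
    have h1 : F0 q ≤ F0 (Function.update p α (q α)) := by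
      apply hF0mono
      intro β
      by_cases hβ : β = α
      · subst hβ; simp
      · have := hq β
        simpa [Function.update_of_ne hβ] using this
    have h2 : Hmin H q ≤ H α (q α) :=
      ciInf_le (Set.Finite.bddBelow (Set.finite_range _)) α
    calc min (F0 q) (Hmin H q)
        ≤ min (F0 (Function.update p α (q α))) (H α (q α)) := min_le_min h1 h2
      _ ≤ sSup T := le_csSup hBdd ⟨q α, hqα, rfl⟩
  · exact csSup_le hTne hTub
end
end

section
/- Characterization of super-relaxation: for p ∈ ℝ^N define p̲ ∈ [−∞,∞)^N by p̲^α = p^α if H^α(p^α) ≤ F_0(p), and p̲^α = inf{ q^α ≤ p^α : H^α(r) > F_0(p) for all r ∈ (q^α, p^α] } if H^α(p^α) > F_0(p). Then F_0 = R̄F_0 if and only if for every p ∈ ℝ^N: (a) p̲^α > −∞ whenever H^α(p^α) > F_0(p), and (b) F_0(q) = F_0(p) for all q in the box [p̲, p] = ∏_α [p̲^α, p^α]. -/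
open Set

noncomputable section

/-- The set whose infimum defines the lower point `p̲^α` in the characterization of
super-relaxation: `{q^α ≤ p^α : H^α(r) > c` for all `r ∈ (q^α, p^α]}` with `c := F₀(p)`. -/
def lowSet (h : ℝ → ℝ) (c pa : ℝ) : Set ℝ :=
  {qa : ℝ | qa ≤ pa ∧ ∀ r : ℝ, qa < r → r ≤ pa → c < h r}

/-- The lower point `p̲^α`: `p^α` if `H^α(p^α) ≤ c := F₀(p)`, otherwise `inf lowSet`. -/
def pbarLow (h : ℝ → ℝ) (c pa : ℝ) : ℝ :=
  if h pa ≤ c then pa else sInf (lowSet h c pa)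

lemma pa_mem_lowSet (h : ℝ → ℝ) (c pa : ℝ) : pa ∈ lowSet h c pa :=
  ⟨le_refl _, fun r h1 h2 => absurd (h1.trans_le h2) (lt_irrefl _)⟩

lemma lowSet_gt (h : ℝ → ℝ) {c pa : ℝ} (_hb : BddBelow (lowSet h c pa))
    {r : ℝ} (h1 : sInf (lowSet h c pa) < r) (h2 : r ≤ pa) : c < h r := by
  obtain ⟨qa, hqa, hlt⟩ := exists_lt_of_csInf_lt ⟨pa, pa_mem_lowSet h c pa⟩ h1
  exact hqa.2 r hlt h2

lemma le_sInf_lowSet (h : ℝ → ℝ) {c pa x : ℝ} (hb : BddBelow (lowSet h c pa))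
    (hx : x ≤ pa) (hhx : h x ≤ c) : x ≤ sInf (lowSet h c pa) := by
  by_contra hc
  exact absurd (lowSet_gt h hb (not_le.1 hc) hx) (not_lt.2 hhx)

lemma h_sInf_le (h : ℝ → ℝ) (hc : Continuous h) {c pa : ℝ}
    (hb : BddBelow (lowSet h c pa)) : h (sInf (lowSet h c pa)) ≤ c := by
  by_contra hgt
  push_neg at hgt
  set s := sInf (lowSet h c pa) with hs
  have hspa : s ≤ pa := csInf_le hb (pa_mem_lowSet h c pa)
  have hopen : IsOpen (h ⁻¹' Ioi c) := isOpen_Ioi.preimage hc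
  obtain ⟨ε, hε, hball⟩ := Metric.isOpen_iff.1 hopen s hgt
  have hmem : s - ε/2 ∈ lowSet h c pa := by
    constructor
    · linarith
    · intro r h1 h2
      rcases le_or_gt r s with h3 | h3
      · apply hball
        rw [Real.ball_eq_Ioo]
        constructor <;> [linarith; linarith]
      · exact lowSet_gt h hb h3 h2
  have := csInf_le hb hmem
  rw [← hs] at this
  linarith

lemma coercive_unif_bound (h : ℝ → ℝ) (hc : Continuous h) (hco : CoerciveHam h)
    (c pa : ℝ) (hall : ∀ x ≤ pa, c < h x) : ∃ m, c < m ∧ ∀ x ≤ pa, m ≤ h x := by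
  obtain ⟨R, hR⟩ := hco (c + 1)
  set R' := max R (|pa|) with hR'
  have hne : -R' ≤ pa := by
    have h1 : |pa| ≤ R' := le_max_right _ _
    have := neg_abs_le pa
    linarith
  obtain ⟨x0, hx0mem, hx0min⟩ := isCompact_Icc.exists_isMinOn (Set.nonempty_Icc.2 hne)
    hc.continuousOn (f := h) (s := Icc (-R') pa)
  refine ⟨min (c+1) (h x0), lt_min (by linarith) (hall x0 hx0mem.2), ?_⟩
  intro x hx
  rcases le_or_gt x (-R') with h1 | h1
  · have hRx : R ≤ |x| := by
      have h2 : R ≤ R' := le_max_left _ _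
      have := neg_le_abs x
      linarith
    exact le_trans (min_le_left _ _) (hR x hRx)
  · exact le_trans (min_le_right _ _) (hx0min ⟨h1.le, hx⟩)

theorem characterization_of_super_relaxation
    (N : ℕ) (hN : 1 ≤ N)
    (H : Fin N → ℝ → ℝ)
    (hHcont : ∀ α, Continuous (H α))
    (hHcoer : ∀ α, CoerciveHam (H α))
    (F0 : (Fin N → ℝ) → ℝ)
    (hF0cont : Continuous F0)
    (hF0mono : Antitone F0) :
    (∀ p : Fin N → ℝ, F0 p = Rsup H F0 p) ↔
      (∀ p : Fin N → ℝ,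
        (∀ α, F0 p < H α (p α) → BddBelow (lowSet (H α) (F0 p) (p α))) ∧
        (∀ q : Fin N → ℝ,
          (∀ α, q α ∈ Icc (pbarLow (H α) (F0 p) (p α)) (p α)) → F0 q = F0 p)) := by
  have hNE : Nonempty (Fin N) := ⟨⟨0, hN⟩⟩
  have hHmax_ge : ∀ (q : Fin N → ℝ) (α : Fin N), H α (q α) ≤ Hmax H q := by
    intro q α
    show H α (q α) ≤ ⨆ β, H β (q β)
    exact le_ciSup (Set.finite_range (fun β => H β (q β))).bddAbove α
  set S : (Fin N → ℝ) → Set ℝ :=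
    fun p => {v : ℝ | ∃ q : Fin N → ℝ, q ≤ p ∧ v = max (F0 q) (Hmax H q)} with hSdef
  have hRsup_eq : ∀ p, Rsup H F0 p = sInf (S p) := fun _ => rfl
  have hSne : ∀ p, (S p).Nonempty := fun p => ⟨_, p, le_refl p, rfl⟩
  have hSbdd : ∀ p, ∀ v ∈ S p, F0 p ≤ v := by
    rintro p v ⟨q, hq, rfl⟩
    exact le_trans (hF0mono hq) (le_max_left _ _)
  have hRsup_ge : ∀ p, F0 p ≤ Rsup H F0 p := fun p => le_csInf (hSne p) (hSbdd p)
  constructor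
  · intro hF p
    set c := F0 p with hc
    have ha : ∀ α, c < H α (p α) → BddBelow (lowSet (H α) c (p α)) := by
      intro α hα
      by_contra hnb
      have hall : ∀ x ≤ p α, c < H α x := by
        intro x hx
        obtain ⟨qa, hqa, hlt⟩ := not_bddBelow_iff.1 hnb x
        exact hqa.2 x hlt hx
      obtain ⟨m, hm, hmle⟩ := coercive_unif_bound (H α) (hHcont α) (hHcoer α) c (p α) hall
      have hge : m ≤ Rsup H F0 p := by
        rw [hRsup_eq]
        apply le_csInf (hSne p)
        rintro v ⟨q, hq, rfl⟩
        exact le_trans (le_trans (hmle (q α) (hq α)) (hHmax_ge q α)) (le_max_right _ _)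
      rw [← hF p] at hge
      linarith
    refine ⟨ha, ?_⟩
    choose R hR using fun α => hHcoer α (c + 2)
    set lo : Fin N → ℝ := fun α => min (-(max (R α) 0)) (p α) with hlo
    have hlo_bound : ∀ α (x : ℝ), x ≤ p α → H α x ≤ c + 1 → lo α ≤ x := by
      intro α x hx hhx
      by_contra hcon
      push_neg at hcon
      have h1 : x < -(max (R α) 0) := lt_of_lt_of_le hcon (min_le_left _ _)
      have h2 : R α ≤ |x| := by
        have h3 := le_max_left (R α) 0
        have h4 := neg_le_abs x
        linarith
      have := hR α x h2
      linarith
    have hkey : ∀ ε > (0:ℝ), ∃ q, q ≤ p ∧ F0 q ≤ c + ε ∧ ∀ α, H α (q α) ≤ c + ε := by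
      intro ε hε
      have hlt : sInf (S p) < c + ε := by
        rw [← hRsup_eq, ← hF p]; linarith
      obtain ⟨v, ⟨q, hq, rfl⟩, hvlt⟩ := exists_lt_of_csInf_lt (hSne p) hlt
      exact ⟨q, hq, le_of_lt (lt_of_le_of_lt (le_max_left _ _) hvlt),
        fun α => le_of_lt (lt_of_le_of_lt (le_trans (hHmax_ge q α) (le_max_right _ _)) hvlt)⟩
    set T : ℕ → Set (Fin N → ℝ) := fun n =>
      {r | r ∈ Icc lo p ∧ (F0 r ≤ c + 1/((n:ℝ)+1) ∧ ∀ α, H α (r α) ≤ c + 1/((n:ℝ)+1))} with hT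
    have hTsub : ∀ i, T (i+1) ⊆ T i := by
      rintro i r ⟨h1, h2, h3⟩
      have hmono : (1:ℝ)/((i:ℝ)+1+1) ≤ 1/((i:ℝ)+1) := by
        apply one_div_le_one_div_of_le
        · positivity
        · linarith
      refine ⟨h1, by push_cast at h2 ⊢; linarith, fun α => ?_⟩
      have := h3 α
      push_cast at this ⊢
      linarith
    have hTne : ∀ n, (T n).Nonempty := by
      intro n
      have hpos : (0:ℝ) < 1/((n:ℝ)+1) := by positivity
      obtain ⟨q, hq, h2, h3⟩ := hkey (1/((n:ℝ)+1)) hpos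
      have hone : (1:ℝ)/((n:ℝ)+1) ≤ 1 := by
        rw [div_le_one (by positivity)]; linarith [Nat.cast_nonneg (α := ℝ) n]
      refine ⟨q, ⟨fun α => hlo_bound α (q α) (hq α) (by linarith [h3 α]), hq⟩, h2, h3⟩
    have hTclosed : ∀ n, IsClosed (T n) := by
      intro n
      have h1 : IsClosed (Icc lo p) := isClosed_Icc
      have h2 : IsClosed {r : Fin N → ℝ | F0 r ≤ c + 1/((n:ℝ)+1)} :=
        isClosed_le hF0cont continuous_const
      have h3 : IsClosed {r : Fin N → ℝ | ∀ α, H α (r α) ≤ c + 1/((n:ℝ)+1)} := by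
        have heq : {r : Fin N → ℝ | ∀ α, H α (r α) ≤ c + 1/((n:ℝ)+1)}
            = ⋂ α, {r : Fin N → ℝ | H α (r α) ≤ c + 1/((n:ℝ)+1)} := by
          ext r; simp
        rw [heq]
        exact isClosed_iInter fun α =>
          isClosed_le ((hHcont α).comp (continuous_apply α)) continuous_const
      exact h1.inter (h2.inter h3)
    have hTcpt : IsCompact (T 0) :=
      isCompact_Icc.of_isClosed_subset (hTclosed 0) (fun r hr => hr.1)
    obtain ⟨r, hr⟩ := IsCompact.nonempty_iInter_of_sequence_nonempty_isCompact_isClosed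
      T hTsub hTne hTcpt hTclosed
    simp only [mem_iInter] at hr
    have hrle : r ≤ p := (hr 0).1.2
    have hsmall : ∀ a : ℝ, (∀ n : ℕ, a ≤ c + 1/((n:ℝ)+1)) → a ≤ c := by
      intro a hA
      apply le_of_forall_pos_le_add
      intro ε hε
      obtain ⟨n, hn⟩ := exists_nat_one_div_lt hε
      have := hA n
      push_cast at this hn ⊢
      linarith
    have hF0r : F0 r ≤ c := hsmall _ (fun n => (hr n).2.1)
    have hHr : ∀ α, H α (r α) ≤ c := fun α => hsmall _ (fun n => (hr n).2.2 α)
    intro q hq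
    have hq_le_p : q ≤ p := fun α => (hq α).2
    have hrq : r ≤ q := by
      intro α
      rcases le_or_gt (H α (p α)) c with hgood | hbad
      · have heq : pbarLow (H α) c (p α) = p α := if_pos hgood
        exact le_trans (hrle α) (heq ▸ (hq α).1)
      · have hbb := ha α hbad
        have h1 : r α ≤ sInf (lowSet (H α) c (p α)) :=
          le_sInf_lowSet (H α) hbb (hrle α) (hHr α)
        have h2 : pbarLow (H α) c (p α) = sInf (lowSet (H α) c (p α)) :=
          if_neg (not_le.2 hbad)
        exact le_trans h1 (h2 ▸ (hq α).1)
    have h1 : F0 q ≤ F0 r := hF0mono hrq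
    have h2 : c ≤ F0 q := hF0mono hq_le_p
    linarith
  · intro hcond p
    obtain ⟨ha, hb⟩ := hcond p
    set c := F0 p with hc
    set pb : Fin N → ℝ := fun α => pbarLow (H α) c (p α) with hpb
    have hpb_le : ∀ α, pb α ≤ p α := by
      intro α
      by_cases hα : H α (p α) ≤ c
      · simp [hpb, pbarLow, hα]
      · have hbb := ha α (not_le.1 hα)
        simp only [hpb, pbarLow, if_neg hα]
        exact csInf_le hbb (pa_mem_lowSet _ _ _)
    have hpb_mem : ∀ α, pb α ∈ Icc (pbarLow (H α) c (p α)) (p α) :=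
      fun α => ⟨le_refl _, hpb_le α⟩
    have hF0pb : F0 pb = c := hb pb hpb_mem
    have hHpb : ∀ α, H α (pb α) ≤ c := by
      intro α
      by_cases hα : H α (p α) ≤ c
      · have heq : pb α = p α := by simp [hpb, pbarLow, hα]
        rw [heq]; exact hα
      · have hbb := ha α (not_le.1 hα)
        have h1 := h_sInf_le (H α) (hHcont α) hbb
        have heq : pb α = sInf (lowSet (H α) c (p α)) := by
          simp [hpb, pbarLow, hα]
        rw [heq]; exact h1
    have hle : Rsup H F0 p ≤ c := by
      rw [hRsup_eq]
      have hmem : max (F0 pb) (Hmax H pb) ∈ S p := ⟨pb, fun α => hpb_le α, rfl⟩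
      have h1 := csInf_le ⟨c, fun v hv => hSbdd p v hv⟩ hmem
      have hmax : max (F0 pb) (Hmax H pb) ≤ c :=
        max_le hF0pb.le (show (⨆ α, H α (pb α)) ≤ c from ciSup_le hHpb)
      exact le_trans h1 hmax
    exact le_antisymm (hRsup_ge p) hle
end
end

section
/- Lower dimensional restrictions of super-relaxed junction functions are super-relaxed: fix p ∈ ℝ^N and α ∈ {1,…,N}, and define F_0^{α,p} : ℝ → ℝ by F_0^{α,p}(q^α) = F_0(p^1,…,p^{α-1}, q^α, p^{α+1},…,p^N). If F_0 = R̄F_0 (super-relaxed with respect to H = (H^1,…,H^N)), then F_0^{α,p} = R̄_{H^α} F_0^{α,p} (super-relaxed with respect to the single Hamiltonian H^α). -/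
open Set

noncomputable section

/-- One-dimensional super-relaxation with respect to a single Hamiltonian `h`. -/
def Rsup1 (h : ℝ → ℝ) (f : ℝ → ℝ) (x : ℝ) : ℝ :=
  sInf {v : ℝ | ∃ r : ℝ, r ≤ x ∧ v = max (f r) (h r)}

theorem restriction_of_super_relaxed_is_super_relaxed
    (N : ℕ) (hN : 1 ≤ N)
    (H : Fin N → ℝ → ℝ)
    (hHcont : ∀ α, Continuous (H α))
    (hHcoer : ∀ α, CoerciveHam (H α))
    (F0 : (Fin N → ℝ) → ℝ)
    (hF0cont : Continuous F0)
    (hF0mono : Antitone F0)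
    (hrelaxed : ∀ x : Fin N → ℝ, F0 x = Rsup H F0 x)
    (p : Fin N → ℝ) (α : Fin N) :
    ∀ t : ℝ,
      F0 (Function.update p α t)
        = Rsup1 (H α) (fun s => F0 (Function.update p α s)) t := by
  intro t
  set f : ℝ → ℝ := fun s => F0 (Function.update p α s) with hf
  set S : Set ℝ := {v : ℝ | ∃ r : ℝ, r ≤ t ∧ v = max (f r) (H α r)} with hS
  -- lower bound of S
  have hlb : ∀ v ∈ S, f t ≤ v := by
    rintro v ⟨r, hr, rfl⟩
    have hle : Function.update p α r ≤ Function.update p α t := by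
      intro β
      by_cases hβ : β = α
      · subst hβ; simp [hr]
      · simp [Function.update_of_ne hβ]
    exact le_trans (hF0mono hle) (le_max_left _ _)
  have hSne : S.Nonempty := ⟨max (f t) (H α t), t, le_refl t, rfl⟩
  refine le_antisymm (le_csInf hSne hlb) ?_
  -- sInf S ≤ f t
  refine le_of_forall_pos_le_add ?_
  intro ε hε
  set x : Fin N → ℝ := Function.update p α t with hx
  have hxα : x α = t := Function.update_self α t p
  have hrel := hrelaxed x
  have hBne : {v : ℝ | ∃ q : Fin N → ℝ, q ≤ x ∧ v = max (F0 q) (Hmax H q)}.Nonempty :=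
    ⟨max (F0 x) (Hmax H x), x, le_refl x, rfl⟩
  have hlt : sInf {v : ℝ | ∃ q : Fin N → ℝ, q ≤ x ∧ v = max (F0 q) (Hmax H q)} < F0 x + ε := by
    rw [Rsup] at hrel
    rw [← hrel]; linarith
  obtain ⟨v, ⟨q, hqx, rfl⟩, hvlt⟩ := exists_lt_of_csInf_lt hBne hlt
  -- build the 1-d competitor r = q α
  have hrt : q α ≤ t := by simpa [hxα] using hqx α
  have hqle : q ≤ Function.update p α (q α) := by
    intro β
    by_cases hβ : β = α
    · subst hβ; simp
    · have := hqx β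
      simp only [hx, Function.update_of_ne hβ] at this ⊢
      exact this
  have hfq : f (q α) ≤ F0 q := hF0mono hqle
  haveI : Nonempty (Fin N) := ⟨⟨0, hN⟩⟩
  have hHq : H α (q α) ≤ Hmax H q := by
    have : BddAbove (Set.range fun β => H β (q β)) := Set.Finite.bddAbove (Set.finite_range _)
    exact le_ciSup this α
  have hmem : max (f (q α)) (H α (q α)) ∈ S := ⟨q α, hrt, rfl⟩
  have h1 : sInf S ≤ max (f (q α)) (H α (q α)) := csInf_le ⟨f t, hlb⟩ hmem
  have h2 : max (f (q α)) (H α (q α)) ≤ max (F0 q) (Hmax H q) := max_le_max hfq hHq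
  have hft : f t = F0 x := by simp [hf, hx]
  calc sInf S ≤ max (f (q α)) (H α (q α)) := h1
    _ ≤ max (F0 q) (Hmax H q) := h2
    _ ≤ F0 x + ε := le_of_lt hvlt
    _ = f t + ε := by rw [hft]
end
end

section
/- Let F := 𝔕F_0 = R̄(R̲F_0). Then for every sub-characteristic point p of F (p ∈ χ̲(F)) one has F(p) ≤ (R̄F_0)(p) ≤ F_0(p), and for every super-characteristic point p of F (p ∈ χ̄(F)) one has F(p) ≥ (R̲F_0)(p) ≥ F_0(p). -/
open Set

noncomputable section

/-- A continuous coercive Hamiltonian is bounded below. -/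
lemma ham_lb (h : ℝ → ℝ) (hc : Continuous h) (hco : CoerciveHam h) :
    ∃ c : ℝ, ∀ x, c ≤ h x := by
  obtain ⟨R, hR⟩ := hco 0
  obtain ⟨x₀, hx₀, hmin⟩ := isCompact_Icc.exists_isMinOn (f := h)
    ⟨0, ⟨neg_nonpos.2 (abs_nonneg R), abs_nonneg R⟩⟩ hc.continuousOn
  refine ⟨min (h x₀) 0, fun x => ?_⟩
  by_cases hx : |x| ≤ |R|
  · exact (min_le_left _ _).trans (hmin (abs_le.mp hx))
  · exact (min_le_right _ _).trans (hR x ((le_abs_self R).trans (le_of_not_ge hx)))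

theorem relaxation_at_characteristic_points
    (N : ℕ) (hN : 1 ≤ N)
    (H : Fin N → ℝ → ℝ)
    (hHcont : ∀ α, Continuous (H α))
    (hHcoer : ∀ α, CoerciveHam (H α))
    (F0 : (Fin N → ℝ) → ℝ)
    (hF0cont : Continuous F0)
    (hF0mono : Antitone F0) :
    (∀ p : Fin N → ℝ, SubChar H (Rsup H (Rsub H F0)) p →
      Rsup H (Rsub H F0) p ≤ Rsup H F0 p ∧ Rsup H F0 p ≤ F0 p) ∧
    (∀ p : Fin N → ℝ, SuperChar H (Rsup H (Rsub H F0)) p →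
      Rsub H F0 p ≤ Rsup H (Rsub H F0) p ∧ F0 p ≤ Rsub H F0 p) := by
  haveI : Nonempty (Fin N) := ⟨⟨0, hN⟩⟩
  -- a global lower bound for all Hamiltonians
  have hCex : ∃ C : ℝ, ∀ α x, C ≤ H α x := by
    choose c hc using fun α => ham_lb (H α) (hHcont α) (hHcoer α)
    refine ⟨Finset.univ.inf' Finset.univ_nonempty c, fun α x => ?_⟩
    exact (Finset.inf'_le c (Finset.mem_univ α)).trans (hc α x)
  obtain ⟨C, hC⟩ := hCex
  set G : (Fin N → ℝ) → ℝ := Rsub H F0 with hGdef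
  -- Hmax lower bound
  have hHmaxC : ∀ q : Fin N → ℝ, C ≤ Hmax H q := by
    intro q
    have h := le_ciSup (f := fun α => H α (q α))
      (Set.Finite.bddAbove (Set.finite_range _)) (Classical.arbitrary _)
    exact (hC _ _).trans h
  -- sub-relaxation set facts
  have hSne : ∀ p : Fin N → ℝ,
      (Set.Nonempty {v : ℝ | ∃ q : Fin N → ℝ, p ≤ q ∧ v = min (F0 q) (Hmin H q)}) :=
    fun p => ⟨_, p, le_rfl, rfl⟩
  have hSub : ∀ p : Fin N → ℝ, ∀ v ∈ {v : ℝ | ∃ q : Fin N → ℝ, p ≤ q ∧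
      v = min (F0 q) (Hmin H q)}, v ≤ F0 p := by
    rintro p v ⟨q, hq, rfl⟩
    exact (min_le_left _ _).trans (hF0mono hq)
  have hSbdd : ∀ p : Fin N → ℝ,
      BddAbove {v : ℝ | ∃ q : Fin N → ℝ, p ≤ q ∧ v = min (F0 q) (Hmin H q)} :=
    fun p => ⟨F0 p, hSub p⟩
  have hGle : ∀ p, G p ≤ F0 p := fun p => csSup_le (hSne p) (hSub p)
  have hGmem : ∀ p q : Fin N → ℝ, p ≤ q → min (F0 q) (Hmin H q) ≤ G p :=
    fun p q hq => le_csSup (hSbdd p) ⟨q, hq, rfl⟩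
  have hGanti : Antitone G := by
    intro p p' hpp'
    refine csSup_le_csSup (hSbdd p) (hSne p') ?_
    rintro v ⟨q, hq, rfl⟩
    exact ⟨q, hpp'.trans hq, rfl⟩
  -- super-relaxation set facts (generic in F)
  have hTne : ∀ (F : (Fin N → ℝ) → ℝ) (p : Fin N → ℝ),
      (Set.Nonempty {v : ℝ | ∃ q : Fin N → ℝ, q ≤ p ∧ v = max (F q) (Hmax H q)}) :=
    fun F p => ⟨_, p, le_rfl, rfl⟩
  have hTbdd : ∀ (F : (Fin N → ℝ) → ℝ) (p : Fin N → ℝ),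
      BddBelow {v : ℝ | ∃ q : Fin N → ℝ, q ≤ p ∧ v = max (F q) (Hmax H q)} := by
    intro F p
    refine ⟨C, ?_⟩
    rintro v ⟨q, hq, rfl⟩
    exact (hHmaxC q).trans (le_max_right _ _)
  have hRsupLe : ∀ (F : (Fin N → ℝ) → ℝ) (p q : Fin N → ℝ), q ≤ p →
      Rsup H F p ≤ max (F q) (Hmax H q) :=
    fun F p q hq => csInf_le (hTbdd F p) ⟨q, hq, rfl⟩
  -- F := Rsup H G ; claim 1a : Rsup G ≤ Rsup F0
  have hA1 : ∀ p, Rsup H G p ≤ Rsup H F0 p := by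
    intro p
    refine le_csInf (hTne F0 p) ?_
    rintro v ⟨q, hq, rfl⟩
    exact (hRsupLe G p q hq).trans (max_le_max (hGle q) le_rfl)
  -- claim 2a : G ≤ Rsup G
  have hA2 : ∀ p, G p ≤ Rsup H G p := by
    intro p
    refine le_csInf (hTne G p) ?_
    rintro v ⟨q, hq, rfl⟩
    exact (hGanti hq).trans (le_max_left _ _)
  constructor
  · -- sub-characteristic points
    rintro p ⟨ε, hε, hchar⟩
    refine ⟨hA1 p, ?_⟩
    -- F p ≤ F0 p via a left approximation
    have hFF0 : Rsup H G p ≤ F0 p := by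
      have htend : Filter.Tendsto (fun δ : ℝ => F0 (fun α => p α - δ))
          (nhdsWithin 0 (Set.Ioi 0)) (nhds (F0 p)) := by
        have hco : Continuous (fun δ : ℝ => (fun α => p α - δ : Fin N → ℝ)) :=
          continuous_pi fun α => continuous_const.sub continuous_id
        have := (hF0cont.comp hco).tendsto 0
        simp only [Function.comp] at this
        have h0 : F0 (fun α => p α - (0:ℝ)) = F0 p := by norm_num
        rw [h0] at this
        exact this.mono_left nhdsWithin_le_nhds
      refine ge_of_tendsto htend ?_
      filter_upwards [Ioo_mem_nhdsGT_of_mem (show (0:ℝ) ∈ Set.Ico 0 ε from ⟨le_rfl, hε⟩)]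
        with δ hδ
      obtain ⟨hδ0, hδε⟩ := hδ
      set q : Fin N → ℝ := fun α => p α - δ with hqdef
      have hqp : q ≤ p := fun α => by simp [hqdef, hδ0.le]
      have hHmaxq : Hmax H q < Rsup H G p := by
        obtain ⟨α₀, hα₀⟩ := Finite.exists_max (fun α => H α (q α))
        have h1 : Hmax H q ≤ H α₀ (q α₀) := ciSup_le hα₀
        have h2 : H α₀ (q α₀) < H α₀ (p α₀) :=
          (hchar α₀).2 (q α₀) (by simp [hqdef]; linarith) (by simp [hqdef]; linarith)
        calc Hmax H q ≤ H α₀ (q α₀) := h1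
          _ < H α₀ (p α₀) := h2
          _ = Rsup H G p := (hchar α₀).1
      have hle : Rsup H G p ≤ max (G q) (Hmax H q) := hRsupLe G p q hqp
      have hFGq : Rsup H G p ≤ G q := by
        rcases le_total (G q) (Hmax H q) with h | h
        · rw [max_eq_right h] at hle; exact absurd (hle.trans_lt hHmaxq) (lt_irrefl _)
        · rwa [max_eq_left h] at hle
      exact hFGq.trans (hGle q)
    have hHmaxp : Hmax H p = Rsup H G p := by
      have : Hmax H p = ⨆ _ : Fin N, Rsup H G p := iSup_congr fun α => (hchar α).1
      rw [this, ciSup_const]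
    have := hRsupLe F0 p p le_rfl
    rwa [hHmaxp, max_eq_left hFF0] at this
  · -- super-characteristic points
    rintro p ⟨ε, hε, hchar⟩
    refine ⟨hA2 p, ?_⟩
    have hF0F : F0 p ≤ Rsup H G p := by
      have htend : Filter.Tendsto (fun δ : ℝ => F0 (fun α => p α + δ))
          (nhdsWithin 0 (Set.Ioi 0)) (nhds (F0 p)) := by
        have hco : Continuous (fun δ : ℝ => (fun α => p α + δ : Fin N → ℝ)) :=
          continuous_pi fun α => continuous_const.add continuous_id
        have := (hF0cont.comp hco).tendsto 0
        simp only [Function.comp] at this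
        have h0 : F0 (fun α => p α + (0:ℝ)) = F0 p := by norm_num
        rw [h0] at this
        exact this.mono_left nhdsWithin_le_nhds
      refine le_of_tendsto htend ?_
      filter_upwards [Ioo_mem_nhdsGT_of_mem (show (0:ℝ) ∈ Set.Ico 0 ε from ⟨le_rfl, hε⟩)]
        with δ hδ
      obtain ⟨hδ0, hδε⟩ := hδ
      set r : Fin N → ℝ := fun α => p α + δ with hrdef
      have hpr : p ≤ r := fun α => by simp [hrdef, hδ0.le]
      have hHminr : Rsup H G p < Hmin H r := by
        obtain ⟨α₀, hα₀⟩ := Finite.exists_min (fun α => H α (r α))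
        have h1 : H α₀ (r α₀) ≤ Hmin H r := le_ciInf hα₀
        have h2 : H α₀ (p α₀) < H α₀ (r α₀) :=
          (hchar α₀).2 (r α₀) (by simp [hrdef]; linarith) (by simp [hrdef]; linarith)
        calc Rsup H G p = H α₀ (p α₀) := ((hchar α₀).1).symm
          _ < H α₀ (r α₀) := h2
          _ ≤ Hmin H r := h1
      have hminle : min (F0 r) (Hmin H r) ≤ Rsup H G p :=
        (hGmem p r hpr).trans (hA2 p)
      rcases le_total (F0 r) (Hmin H r) with h | h
      · rwa [min_eq_left h] at hminle
      · rw [min_eq_right h] at hminle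
        exact absurd (hminle.trans_lt hHminr) (lt_irrefl _)
    have hHminp : Hmin H p = Rsup H G p := by
      have : Hmin H p = ⨅ _ : Fin N, Rsup H G p := iInf_congr fun α => (hchar α).1
      rw [this, ciInf_const]
    have := hGmem p p le_rfl
    rwa [hHminp, min_eq_left hF0F] at this
end
end

section
/- Constant sub- /super-relaxed values in a box: (1) if p_0 ∈ ℝ^N satisfies (R̲F_0)(p_0) > H_max(p_0), then there exists p_1 ∈ ℝ^N with p_1^α > p_0^α for every α such that p_1 is a sub-characteristic point of R̲F_0 and (R̲F_0)(p_0) = (R̲F_0)(p_1); (2) if p_0 ∈ ℝ^N satisfies (R̄F_0)(p_0) < H_min(p_0), then there exists p_1 ∈ ℝ^N with p_1^α < p_0^α for every α such that p_1 is a super-characteristic point of R̄F_0 and (R̄F_0)(p_0) = (R̄F_0)(p_1). -/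
open Set

noncomputable section

section ConstRelaxAux

variable {N : ℕ}

lemma hmin_le' [Nonempty (Fin N)] (H : Fin N → ℝ → ℝ) (q : Fin N → ℝ) (α : Fin N) :
    Hmin H q ≤ H α (q α) :=
  ciInf_le (Set.Finite.bddBelow (Set.finite_range _)) α

lemma le_hmin' [Nonempty (Fin N)] {H : Fin N → ℝ → ℝ} {q : Fin N → ℝ} {c : ℝ}
    (h : ∀ α, c ≤ H α (q α)) : c ≤ Hmin H q := le_ciInf h

lemma le_hmax' [Nonempty (Fin N)] (H : Fin N → ℝ → ℝ) (q : Fin N → ℝ) (α : Fin N) :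
    H α (q α) ≤ Hmax H q :=
  le_ciSup (f := fun α => H α (q α)) (Set.Finite.bddAbove (Set.finite_range _)) α

lemma continuous_hmin' [Nonempty (Fin N)] {H : Fin N → ℝ → ℝ}
    (hc : ∀ α, Continuous (H α)) : Continuous (Hmin H) := by
  have h : Hmin H = fun q : Fin N → ℝ =>
      Finset.univ.inf' Finset.univ_nonempty (fun α => H α (q α)) := by
    funext q
    rw [Finset.inf'_univ_eq_ciInf]
    rfl
  rw [h]
  exact Continuous.finset_inf'_apply Finset.univ_nonempty
    (fun i _ => (hc i).comp (continuous_apply i))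

lemma continuous_hmax' [Nonempty (Fin N)] {H : Fin N → ℝ → ℝ}
    (hc : ∀ α, Continuous (H α)) : Continuous (Hmax H) := by
  have h : Hmax H = fun q : Fin N → ℝ =>
      Finset.univ.sup' Finset.univ_nonempty (fun α => H α (q α)) := by
    funext q
    rw [Finset.sup'_univ_eq_ciSup]
    rfl
  rw [h]
  exact Continuous.finset_sup'_apply Finset.univ_nonempty
    (fun i _ => (hc i).comp (continuous_apply i))

end ConstRelaxAux

lemma constant_relaxed_sub
    (N : ℕ) (hN : 1 ≤ N)
    (H : Fin N → ℝ → ℝ)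
    (hHcont : ∀ α, Continuous (H α))
    (hHcoer : ∀ α, CoerciveHam (H α))
    (F0 : (Fin N → ℝ) → ℝ)
    (hF0cont : Continuous F0)
    (hF0mono : Antitone F0)
    (p₀ : Fin N → ℝ) (hp₀ : Hmax H p₀ < Rsub H F0 p₀) :
    ∃ p₁ : Fin N → ℝ, (∀ α, p₀ α < p₁ α) ∧
      SubChar H (Rsub H F0) p₁ ∧ Rsub H F0 p₀ = Rsub H F0 p₁ := by
  haveI : Nonempty (Fin N) := Fin.pos_iff_nonempty.mp hN
  set g : (Fin N → ℝ) → ℝ := fun q => min (F0 q) (Hmin H q) with hgdef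
  have hRsub : ∀ p : Fin N → ℝ, Rsub H F0 p = sSup {v : ℝ | ∃ q, p ≤ q ∧ v = g q} := by
    intro p; rfl
  set L := Rsub H F0 p₀ with hLdef
  have hne : ∀ p : Fin N → ℝ, {v : ℝ | ∃ q, p ≤ q ∧ v = g q}.Nonempty :=
    fun p => ⟨g p, p, le_refl p, rfl⟩
  have hbdd : ∀ p : Fin N → ℝ, BddAbove {v : ℝ | ∃ q, p ≤ q ∧ v = g q} := by
    intro p
    refine ⟨F0 p, ?_⟩
    rintro v ⟨q, hq, rfl⟩
    exact le_trans (min_le_left _ _) (hF0mono hq)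
  have hgcont : Continuous g := hF0cont.min (continuous_hmin' hHcont)
  -- coercivity thresholds
  choose R hR using fun α => hHcoer α L
  set C : Fin N → ℝ := fun α => max |R α| (p₀ α) + 1 with hCdef
  have hC : ∀ α x, C α ≤ x → L ≤ H α x := by
    intro α x hx
    apply hR α
    have h1 : |R α| ≤ C α := by
      have := le_max_left |R α| (p₀ α); simp only [hCdef]; linarith
    have h2 : |R α| ≤ x := le_trans h1 hx
    have h3 : (0 : ℝ) ≤ x := le_trans (abs_nonneg _) h2
    calc R α ≤ |R α| := le_abs_self _
      _ ≤ x := h2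
      _ = |x| := (abs_of_nonneg h3).symm
  have hpC : p₀ ≤ C := by
    intro α
    have := le_max_right |R α| (p₀ α)
    simp only [hCdef]; linarith
  -- maximizer on the box
  have hp₀K : p₀ ∈ Icc p₀ C := ⟨le_refl _, hpC⟩
  obtain ⟨qs, hqsK, hqsmax⟩ :=
    isCompact_Icc.exists_isMaxOn ⟨p₀, hp₀K⟩ hgcont.continuousOn
  have hgle : ∀ q : Fin N → ℝ, p₀ ≤ q → g q ≤ L := by
    intro q hq
    rw [hLdef, hRsub]
    exact le_csSup (hbdd p₀) ⟨q, hq, rfl⟩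
  have hgqs : g qs = L := by
    refine le_antisymm (hgle qs hqsK.1) ?_
    rw [hLdef, hRsub]
    refine csSup_le (hne p₀) ?_
    rintro v ⟨q, hq, rfl⟩
    set q' : Fin N → ℝ := fun α => min (q α) (C α) with hq'def
    have hq'K : q' ∈ Icc p₀ C :=
      ⟨fun α => le_min (hq α) (hpC α), fun α => min_le_right _ _⟩
    have hgq : g q ≤ g q' := by
      refine le_min ?_ ?_
      · exact le_trans (min_le_left _ _) (hF0mono (fun α => min_le_left _ _))
      · refine le_hmin' ?_
        intro α
        rcases le_total (q α) (C α) with h | h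
        · have : q' α = q α := min_eq_left h
          rw [this]
          exact le_trans (min_le_right _ _) (hmin_le' H q α)
        · have : q' α = C α := min_eq_right h
          rw [this]
          exact le_trans (hgle q hq) (hC α _ le_rfl)
    exact le_trans hgq (hqsmax hq'K)
  -- the crossing points
  set S : Fin N → Set ℝ := fun α => {r : ℝ | p₀ α ≤ r ∧ L ≤ H α r} with hSdef
  have hSclosed : ∀ α, IsClosed (S α) :=
    fun α => (isClosed_Ici).inter ((isClosed_Ici).preimage (hHcont α))
  have hSne : ∀ α, (S α).Nonempty := by
    intro α
    exact ⟨C α, hpC α, hC α _ le_rfl⟩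
  have hSbdd : ∀ α, BddBelow (S α) := fun α => ⟨p₀ α, fun r hr => hr.1⟩
  set p₁ : Fin N → ℝ := fun α => sInf (S α) with hp₁def
  have hp₁mem : ∀ α, p₁ α ∈ S α := fun α => (hSclosed α).csInf_mem (hSne α) (hSbdd α)
  have hp₀lt : ∀ α, p₀ α < p₁ α := by
    intro α
    have hHp₀ : H α (p₀ α) < L := lt_of_le_of_lt (le_hmax' H p₀ α) hp₀
    have hU : IsOpen {x : ℝ | H α x < L} := isOpen_lt (hHcont α) continuous_const
    obtain ⟨δ, hδpos, hball⟩ := Metric.isOpen_iff.mp hU (p₀ α) hHp₀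
    have hlb : ∀ r ∈ S α, p₀ α + δ ≤ r := by
      intro r hr
      by_contra hcon
      push_neg at hcon
      have hdist : dist r (p₀ α) < δ := by
        rw [Real.dist_eq, abs_of_nonneg (by linarith [hr.1])]
        linarith [hr.1]
      exact absurd hr.2 (not_le.mpr (hball hdist))
    have h2 := le_csInf (hSne α) hlb
    show p₀ α < sInf (S α)
    linarith
  have hless : ∀ α r, p₀ α ≤ r → r < p₁ α → H α r < L := by
    intro α r hr1 hr2
    by_contra hcon
    push_neg at hcon
    have : p₁ α ≤ r := csInf_le (hSbdd α) ⟨hr1, hcon⟩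
    linarith
  have hHp₁ : ∀ α, H α (p₁ α) = L := by
    intro α
    refine le_antisymm ?_ (hp₁mem α).2
    by_contra hcon
    push_neg at hcon
    have hU : IsOpen {x : ℝ | L < H α x} := isOpen_lt continuous_const (hHcont α)
    obtain ⟨δ, hδpos, hball⟩ := Metric.isOpen_iff.mp hU (p₁ α) hcon
    set r : ℝ := max (p₀ α) (p₁ α - δ / 2) with hrdef
    have hr1 : p₀ α ≤ r := le_max_left _ _
    have hr2 : r < p₁ α := max_lt (hp₀lt α) (by linarith)
    have hr3 : p₁ α - δ / 2 ≤ r := le_max_right _ _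
    have hdist : dist r (p₁ α) < δ := by
      rw [Real.dist_eq, abs_of_nonpos (by linarith)]
      linarith
    have := hball hdist
    exact absurd (hless α r hr1 hr2) (not_lt.mpr (le_of_lt this))
  have hqsp₁ : p₁ ≤ qs := by
    intro α
    refine csInf_le (hSbdd α) ⟨hqsK.1 α, ?_⟩
    calc L = g qs := hgqs.symm
      _ ≤ Hmin H qs := min_le_right _ _
      _ ≤ H α (qs α) := hmin_le' H qs α
  have hp₀p₁ : p₀ ≤ p₁ := fun α => (hp₀lt α).le
  have hRp₁ : Rsub H F0 p₁ = L := by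
    refine le_antisymm ?_ ?_
    · rw [hRsub, hLdef, hRsub]
      refine csSup_le_csSup (hbdd p₀) (hne p₁) ?_
      rintro v ⟨q, hq, rfl⟩
      exact ⟨q, le_trans hp₀p₁ hq, rfl⟩
    · rw [hRsub]
      calc L = g qs := hgqs.symm
        _ ≤ _ := le_csSup (hbdd p₁) ⟨qs, hqsp₁, rfl⟩
  obtain ⟨β, hβ⟩ := Finite.exists_min (fun α => p₁ α - p₀ α)
  refine ⟨p₁, hp₀lt, ⟨p₁ β - p₀ β, by linarith [hp₀lt β], ?_⟩, hRp₁.symm⟩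
  intro α
  refine ⟨by rw [hHp₁ α, hRp₁], ?_⟩
  intro q hq1 hq2
  rw [hHp₁ α]
  have hβα := hβ α
  exact hless α q (by linarith) hq2

lemma constant_relaxed_sup
    (N : ℕ) (hN : 1 ≤ N)
    (H : Fin N → ℝ → ℝ)
    (hHcont : ∀ α, Continuous (H α))
    (hHcoer : ∀ α, CoerciveHam (H α))
    (F0 : (Fin N → ℝ) → ℝ)
    (hF0cont : Continuous F0)
    (hF0mono : Antitone F0)
    (p₀ : Fin N → ℝ) (hp₀ : Rsup H F0 p₀ < Hmin H p₀) :
    ∃ p₁ : Fin N → ℝ, (∀ α, p₁ α < p₀ α) ∧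
      SuperChar H (Rsup H F0) p₁ ∧ Rsup H F0 p₀ = Rsup H F0 p₁ := by
  haveI : Nonempty (Fin N) := Fin.pos_iff_nonempty.mp hN
  set g : (Fin N → ℝ) → ℝ := fun q => max (F0 q) (Hmax H q) with hgdef
  have hRsup : ∀ p : Fin N → ℝ, Rsup H F0 p = sInf {v : ℝ | ∃ q, q ≤ p ∧ v = g q} := by
    intro p; rfl
  set L := Rsup H F0 p₀ with hLdef
  have hne : ∀ p : Fin N → ℝ, {v : ℝ | ∃ q, q ≤ p ∧ v = g q}.Nonempty :=
    fun p => ⟨g p, p, le_refl p, rfl⟩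
  have hbdd : ∀ p : Fin N → ℝ, BddBelow {v : ℝ | ∃ q, q ≤ p ∧ v = g q} := by
    intro p
    refine ⟨F0 p, ?_⟩
    rintro v ⟨q, hq, rfl⟩
    exact le_trans (hF0mono hq) (le_max_left _ _)
  have hgcont : Continuous g := hF0cont.max (continuous_hmax' hHcont)
  -- coercivity thresholds
  choose R hR using fun α => hHcoer α (g p₀ + 1)
  set C : Fin N → ℝ := fun α => min (-|R α|) (p₀ α) - 1 with hCdef
  have hC : ∀ α x, x ≤ C α → g p₀ + 1 ≤ H α x := by
    intro α x hx
    apply hR α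
    have h1 : C α ≤ -|R α| := by
      have := min_le_left (-|R α|) (p₀ α); simp only [hCdef]; linarith
    have h2 : x ≤ -|R α| := le_trans hx h1
    have h3 : x ≤ 0 := le_trans h2 (by simp [abs_nonneg])
    calc R α ≤ |R α| := le_abs_self _
      _ ≤ -x := by linarith
      _ = |x| := (abs_of_nonpos h3).symm
  have hpC : C ≤ p₀ := by
    intro α
    have := min_le_right (-|R α|) (p₀ α)
    simp only [hCdef]; linarith
  -- minimizer on the box
  have hp₀K : p₀ ∈ Icc C p₀ := ⟨hpC, le_refl _⟩
  obtain ⟨qs, hqsK, hqsmin⟩ :=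
    isCompact_Icc.exists_isMinOn ⟨p₀, hp₀K⟩ hgcont.continuousOn
  have hgle : ∀ q : Fin N → ℝ, q ≤ p₀ → L ≤ g q := by
    intro q hq
    rw [hLdef, hRsup]
    exact csInf_le (hbdd p₀) ⟨q, hq, rfl⟩
  have hgqs : g qs = L := by
    refine le_antisymm ?_ (hgle qs hqsK.2)
    rw [hLdef, hRsup]
    refine le_csInf (hne p₀) ?_
    rintro v ⟨q, hq, rfl⟩
    by_cases hq' : C ≤ q
    · exact hqsmin ⟨hq', hq⟩
    · rw [Pi.le_def] at hq'
      push_neg at hq'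
      obtain ⟨α, hα⟩ := hq'
      have h1 : g p₀ + 1 ≤ H α (q α) := hC α _ hα.le
      have h2 : H α (q α) ≤ g q := le_trans (le_hmax' H q α) (le_max_right _ _)
      have h3 : g qs ≤ g p₀ := hqsmin hp₀K
      linarith
  -- the crossing points
  set S : Fin N → Set ℝ := fun α => {r : ℝ | r ≤ p₀ α ∧ H α r ≤ L} with hSdef
  have hSclosed : ∀ α, IsClosed (S α) :=
    fun α => (isClosed_Iic).inter ((isClosed_Iic).preimage (hHcont α))
  have hSne : ∀ α, (S α).Nonempty := by
    intro α
    refine ⟨qs α, hqsK.2 α, ?_⟩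
    calc H α (qs α) ≤ Hmax H qs := le_hmax' H qs α
      _ ≤ g qs := le_max_right _ _
      _ = L := hgqs
  have hSbdd : ∀ α, BddAbove (S α) := fun α => ⟨p₀ α, fun r hr => hr.1⟩
  set p₁ : Fin N → ℝ := fun α => sSup (S α) with hp₁def
  have hp₁mem : ∀ α, p₁ α ∈ S α := fun α => (hSclosed α).csSup_mem (hSne α) (hSbdd α)
  have hp₀lt : ∀ α, p₁ α < p₀ α := by
    intro α
    have hHp₀ : L < H α (p₀ α) := lt_of_lt_of_le hp₀ (hmin_le' H p₀ α)
    have hU : IsOpen {x : ℝ | L < H α x} := isOpen_lt continuous_const (hHcont α)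
    obtain ⟨δ, hδpos, hball⟩ := Metric.isOpen_iff.mp hU (p₀ α) hHp₀
    have hub : ∀ r ∈ S α, r ≤ p₀ α - δ := by
      intro r hr
      by_contra hcon
      push_neg at hcon
      have hdist : dist r (p₀ α) < δ := by
        rw [Real.dist_eq, abs_of_nonpos (by linarith [hr.1])]
        linarith [hr.1]
      exact absurd hr.2 (not_le.mpr (hball hdist))
    have h2 := csSup_le (hSne α) hub
    show sSup (S α) < p₀ α
    linarith
  have hgt : ∀ α r, p₁ α < r → r ≤ p₀ α → L < H α r := by
    intro α r hr1 hr2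
    by_contra hcon
    push_neg at hcon
    have : r ≤ p₁ α := le_csSup (hSbdd α) ⟨hr2, hcon⟩
    linarith
  have hHp₁ : ∀ α, H α (p₁ α) = L := by
    intro α
    refine le_antisymm (hp₁mem α).2 ?_
    by_contra hcon
    push_neg at hcon
    have hU : IsOpen {x : ℝ | H α x < L} := isOpen_lt (hHcont α) continuous_const
    obtain ⟨δ, hδpos, hball⟩ := Metric.isOpen_iff.mp hU (p₁ α) hcon
    set r : ℝ := min (p₀ α) (p₁ α + δ / 2) with hrdef
    have hr1 : r ≤ p₀ α := min_le_left _ _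
    have hr2 : p₁ α < r := lt_min (hp₀lt α) (by linarith)
    have hr3 : r ≤ p₁ α + δ / 2 := min_le_right _ _
    have hdist : dist r (p₁ α) < δ := by
      rw [Real.dist_eq, abs_of_nonneg (by linarith)]
      linarith
    have := hball hdist
    exact absurd (hgt α r hr2 hr1) (not_lt.mpr (le_of_lt this))
  have hqsp₁ : qs ≤ p₁ := by
    intro α
    refine le_csSup (hSbdd α) ⟨hqsK.2 α, ?_⟩
    calc H α (qs α) ≤ Hmax H qs := le_hmax' H qs α
      _ ≤ g qs := le_max_right _ _
      _ = L := hgqs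
  have hp₁p₀ : p₁ ≤ p₀ := fun α => (hp₀lt α).le
  have hRp₁ : Rsup H F0 p₁ = L := by
    refine le_antisymm ?_ ?_
    · rw [hRsup]
      have hsub : {v : ℝ | ∃ q, q ≤ p₁ ∧ v = g q} ⊆ {v : ℝ | ∃ q, q ≤ p₀ ∧ v = g q} := by
        rintro v ⟨q, hq, rfl⟩
        exact ⟨q, le_trans hq hp₁p₀, rfl⟩
      calc sInf {v : ℝ | ∃ q, q ≤ p₁ ∧ v = g q} ≤ g qs :=
            csInf_le ((hbdd p₀).mono hsub) ⟨qs, hqsp₁, rfl⟩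
        _ = L := hgqs
    · rw [hRsup, hLdef, hRsup]
      refine csInf_le_csInf (hbdd p₀) (hne p₁) ?_
      rintro v ⟨q, hq, rfl⟩
      exact ⟨q, le_trans hq hp₁p₀, rfl⟩
  obtain ⟨β, hβ⟩ := Finite.exists_min (fun α => p₀ α - p₁ α)
  refine ⟨p₁, hp₀lt, ⟨p₀ β - p₁ β, by linarith [hp₀lt β], ?_⟩, hRp₁.symm⟩
  intro α
  refine ⟨by rw [hHp₁ α, hRp₁], ?_⟩
  intro q hq1 hq2
  rw [hHp₁ α]
  have hβα := hβ α
  exact hgt α q hq1 (by linarith)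

theorem constant_relaxed_values_in_a_box
    (N : ℕ) (hN : 1 ≤ N)
    (H : Fin N → ℝ → ℝ)
    (hHcont : ∀ α, Continuous (H α))
    (hHcoer : ∀ α, CoerciveHam (H α))
    (F0 : (Fin N → ℝ) → ℝ)
    (hF0cont : Continuous F0)
    (hF0mono : Antitone F0) :
    (∀ p₀ : Fin N → ℝ, Hmax H p₀ < Rsub H F0 p₀ →
      ∃ p₁ : Fin N → ℝ, (∀ α, p₀ α < p₁ α) ∧
        SubChar H (Rsub H F0) p₁ ∧ Rsub H F0 p₀ = Rsub H F0 p₁) ∧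
    (∀ p₀ : Fin N → ℝ, Rsup H F0 p₀ < Hmin H p₀ →
      ∃ p₁ : Fin N → ℝ, (∀ α, p₁ α < p₀ α) ∧
        SuperChar H (Rsup H F0) p₁ ∧ Rsup H F0 p₀ = Rsup H F0 p₁) := by
  exact ⟨constant_relaxed_sub N hN H hHcont hHcoer F0 hF0cont hF0mono,
    constant_relaxed_sup N hN H hHcont hHcoer F0 hF0cont hF0mono⟩
end
end

section
/- Characterization of effective junction conditions: let F : ℝ^N → ℝ be continuous and nonincreasing in each of its arguments. Then F = 𝔕F_0 := R̄(R̲F_0) if and only if the following three conditions hold: (a) F = R̲F = R̄F; (b) F(p) ≥ F_0(p) for every super-characteristic point p of F; (c) F(p) ≤ F_0(p) for every sub-characteristic point p of F. -/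
open Set

noncomputable section

open Filter Topology

namespace EffJ
set_option linter.unusedSectionVars false


/-- lower bound for sublevel sets of a coercive hamiltonian -/
lemma coercive_lb {h : ℝ → ℝ} (hco : CoerciveHam h) (c : ℝ) :
    ∃ B : ℝ, ∀ y : ℝ, h y ≤ c → B ≤ y := by
  obtain ⟨R, hR⟩ := hco (c + 1)
  refine ⟨-|R|, fun y hy => ?_⟩
  by_contra hB
  push_neg at hB
  have hy0 : y < 0 := lt_of_lt_of_le hB (neg_nonpos.mpr (abs_nonneg R))
  have h1 : R ≤ |y| := by
    rw [abs_of_neg hy0]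
    have := le_abs_self R
    linarith
  linarith [hR y h1]

/-- first hitting point of the superlevel set `{h ≥ lam}` to the right of `x`. -/
lemma exists_sHit {h : ℝ → ℝ} (hc : Continuous h) (hco : CoerciveHam h) (x lam : ℝ) :
    ∃ s : ℝ, x ≤ s ∧ lam ≤ h s ∧ (∀ y, x ≤ y → lam ≤ h y → s ≤ y) ∧
      (x < s → h s = lam) := by
  have hSc : IsClosed {y : ℝ | x ≤ y ∧ lam ≤ h y} := by
    have h2 : {y : ℝ | x ≤ y ∧ lam ≤ h y} = Ici x ∩ h ⁻¹' (Ici lam) := by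
      ext y; simp [Set.mem_inter_iff, Set.mem_preimage]
    rw [h2]; exact isClosed_Ici.inter (isClosed_Ici.preimage hc)
  have hSne : Set.Nonempty {y : ℝ | x ≤ y ∧ lam ≤ h y} := by
    obtain ⟨R, hR⟩ := hco lam
    refine ⟨max x |R|, le_max_left _ _, hR _ ?_⟩
    have h0 : (0:ℝ) ≤ max x |R| := le_trans (abs_nonneg R) (le_max_right _ _)
    rw [abs_of_nonneg h0]
    exact le_trans (le_abs_self R) (le_max_right _ _)
  have hSbdd : BddBelow {y : ℝ | x ≤ y ∧ lam ≤ h y} := ⟨x, fun y hy => hy.1⟩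
  have hmem : sInf {y : ℝ | x ≤ y ∧ lam ≤ h y} ∈ {y : ℝ | x ≤ y ∧ lam ≤ h y} :=
    hSc.csInf_mem hSne hSbdd
  refine ⟨sInf {y : ℝ | x ≤ y ∧ lam ≤ h y}, hmem.1, hmem.2,
    fun y h1 h2 => csInf_le hSbdd ⟨h1, h2⟩, fun hxs => ?_⟩
  by_contra hne
  have hlt : lam < h (sInf {y : ℝ | x ≤ y ∧ lam ≤ h y}) := lt_of_le_of_ne hmem.2 (Ne.symm hne)
  have hopen : IsOpen (h ⁻¹' Ioi lam) := isOpen_Ioi.preimage hc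
  obtain ⟨δ, hδ, hball⟩ := Metric.isOpen_iff.mp hopen _ hlt
  set s := sInf {y : ℝ | x ≤ y ∧ lam ≤ h y} with hs
  set y := max x (s - δ/2) with hy
  have hyx : x ≤ y := le_max_left _ _
  have hylt : y < s := max_lt hxs (by linarith)
  have hmemball : y ∈ Metric.ball s δ := by
    rw [Metric.mem_ball, Real.dist_eq, abs_of_nonpos (by linarith)]
    have h3 : s - δ/2 ≤ y := le_max_right _ _
    linarith
  have h4 : lam < h y := hball hmemball
  exact absurd (csInf_le hSbdd ⟨hyx, h4.le⟩) (not_le.mpr hylt)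

/-- last point of the sublevel set `{h ≤ mu}` to the left of `w`. -/
lemma exists_tHit {h : ℝ → ℝ} (hc : Continuous h) {w mu : ℝ}
    (hne : ∃ y, y ≤ w ∧ h y ≤ mu) :
    ∃ t : ℝ, t ≤ w ∧ h t ≤ mu ∧ (∀ y, y ≤ w → h y ≤ mu → y ≤ t) ∧
      (t < w → h t = mu) ∧ (∀ y, t < y → y ≤ w → mu < h y) := by
  have hSc : IsClosed {y : ℝ | y ≤ w ∧ h y ≤ mu} := by
    have h2 : {y : ℝ | y ≤ w ∧ h y ≤ mu} = Iic w ∩ h ⁻¹' (Iic mu) := by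
      ext y; simp [Set.mem_inter_iff, Set.mem_preimage]
    rw [h2]; exact isClosed_Iic.inter (isClosed_Iic.preimage hc)
  have hSne : Set.Nonempty {y : ℝ | y ≤ w ∧ h y ≤ mu} := hne
  have hSbdd : BddAbove {y : ℝ | y ≤ w ∧ h y ≤ mu} := ⟨w, fun y hy => hy.1⟩
  have hmem : sSup {y : ℝ | y ≤ w ∧ h y ≤ mu} ∈ {y : ℝ | y ≤ w ∧ h y ≤ mu} :=
    hSc.csSup_mem hSne hSbdd
  have hmax : ∀ y, y ≤ w → h y ≤ mu → y ≤ sSup {y : ℝ | y ≤ w ∧ h y ≤ mu} :=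
    fun y h1 h2 => le_csSup hSbdd ⟨h1, h2⟩
  refine ⟨sSup {y : ℝ | y ≤ w ∧ h y ≤ mu}, hmem.1, hmem.2, hmax, fun htw => ?_,
    fun y hy1 hy2 => ?_⟩
  · by_contra hne'
    have hlt : h (sSup {y : ℝ | y ≤ w ∧ h y ≤ mu}) < mu := lt_of_le_of_ne hmem.2 hne'
    have hopen : IsOpen (h ⁻¹' Iio mu) := isOpen_Iio.preimage hc
    obtain ⟨δ, hδ, hball⟩ := Metric.isOpen_iff.mp hopen _ hlt
    set t := sSup {y : ℝ | y ≤ w ∧ h y ≤ mu} with ht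
    set y := min w (t + δ/2) with hy
    have hyw : y ≤ w := min_le_left _ _
    have hygt : t < y := lt_min htw (by linarith)
    have hmemball : y ∈ Metric.ball t δ := by
      rw [Metric.mem_ball, Real.dist_eq, abs_of_nonneg (by linarith)]
      have h3 : y ≤ t + δ/2 := min_le_right _ _
      linarith
    have h4 : h y < mu := hball hmemball
    exact absurd (hmax y hyw h4.le) (not_le.mpr hygt)
  · by_contra hcon
    push_neg at hcon
    exact absurd (hmax y hy2 hcon) (not_le.mpr hy1)

variable {N : ℕ} [Nonempty (Fin N)] (H : Fin N → ℝ → ℝ)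

lemma hmin_le (p : Fin N → ℝ) (α : Fin N) : Hmin H p ≤ H α (p α) :=
  ciInf_le (Set.finite_range fun α => H α (p α)).bddBelow α

lemma le_hmin {p : Fin N → ℝ} {c : ℝ} (h : ∀ α, c ≤ H α (p α)) : c ≤ Hmin H p := le_ciInf h

lemma lt_hmin {p : Fin N → ℝ} {c : ℝ} (h : ∀ α, c < H α (p α)) : c < Hmin H p := by
  obtain ⟨β, hβ⟩ := Finite.exists_min (fun α => H α (p α))
  exact lt_of_lt_of_le (h β) (le_ciInf hβ)

lemma hmin_eq {p : Fin N → ℝ} {c : ℝ} (h : ∀ α, H α (p α) = c) : Hmin H p = c :=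
  le_antisymm (le_of_le_of_eq (hmin_le H p (Classical.arbitrary _)) (h _))
    (le_hmin H (fun α => (h α).ge))

lemma le_hmax (p : Fin N → ℝ) (α : Fin N) : H α (p α) ≤ Hmax H p :=
  le_ciSup (Set.finite_range fun α => H α (p α)).bddAbove α

lemma hmax_le {p : Fin N → ℝ} {c : ℝ} (h : ∀ α, H α (p α) ≤ c) : Hmax H p ≤ c := ciSup_le h

lemma hmax_lt {p : Fin N → ℝ} {c : ℝ} (h : ∀ α, H α (p α) < c) : Hmax H p < c := by
  obtain ⟨β, hβ⟩ := Finite.exists_max (fun α => H α (p α))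
  exact lt_of_le_of_lt (ciSup_le hβ) (h β)

lemma rsubSet_nonempty (F : (Fin N → ℝ) → ℝ) (p : Fin N → ℝ) :
    Set.Nonempty {v : ℝ | ∃ q : Fin N → ℝ, p ≤ q ∧ v = min (F q) (Hmin H q)} :=
  ⟨_, p, le_refl p, rfl⟩

lemma rsubSet_bddAbove {F : (Fin N → ℝ) → ℝ} (hFa : Antitone F) (p : Fin N → ℝ) :
    BddAbove {v : ℝ | ∃ q : Fin N → ℝ, p ≤ q ∧ v = min (F q) (Hmin H q)} :=
  ⟨F p, by rintro v ⟨q, hq, rfl⟩; exact le_trans (min_le_left _ _) (hFa hq)⟩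

lemma rsub_le {F : (Fin N → ℝ) → ℝ} (hFa : Antitone F) (p : Fin N → ℝ) :
    Rsub H F p ≤ F p :=
  csSup_le (rsubSet_nonempty H F p) (by rintro v ⟨q, hq, rfl⟩; exact le_trans (min_le_left _ _) (hFa hq))

lemma le_rsub {F : (Fin N → ℝ) → ℝ} (hFa : Antitone F) {p q : Fin N → ℝ} (hpq : p ≤ q) :
    min (F q) (Hmin H q) ≤ Rsub H F p :=
  le_csSup (rsubSet_bddAbove H hFa p) ⟨q, hpq, rfl⟩

lemma rsub_antitone {F : (Fin N → ℝ) → ℝ} (hFa : Antitone F) : Antitone (Rsub H F) :=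
  fun _p _q hpq => csSup_le_csSup (rsubSet_bddAbove H hFa _) (rsubSet_nonempty H F _)
    (by rintro v ⟨u, hu, rfl⟩; exact ⟨u, le_trans hpq hu, rfl⟩)

lemma rsub_exists_gt {F : (Fin N → ℝ) → ℝ} {p : Fin N → ℝ} {b : ℝ} (h : b < Rsub H F p) :
    ∃ q, p ≤ q ∧ b < min (F q) (Hmin H q) := by
  obtain ⟨v, ⟨q, hq, rfl⟩, hv⟩ := exists_lt_of_lt_csSup (rsubSet_nonempty H F p) h
  exact ⟨q, hq, hv⟩

lemma rsupSet_nonempty (F : (Fin N → ℝ) → ℝ) (p : Fin N → ℝ) :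
    Set.Nonempty {v : ℝ | ∃ q : Fin N → ℝ, q ≤ p ∧ v = max (F q) (Hmax H q)} :=
  ⟨_, p, le_refl p, rfl⟩

lemma rsupSet_bddBelow {F : (Fin N → ℝ) → ℝ} (hFa : Antitone F) (p : Fin N → ℝ) :
    BddBelow {v : ℝ | ∃ q : Fin N → ℝ, q ≤ p ∧ v = max (F q) (Hmax H q)} :=
  ⟨F p, by rintro v ⟨q, hq, rfl⟩; exact le_trans (hFa hq) (le_max_left _ _)⟩

lemma le_rsup {F : (Fin N → ℝ) → ℝ} (hFa : Antitone F) (p : Fin N → ℝ) :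
    F p ≤ Rsup H F p :=
  le_csInf (rsupSet_nonempty H F p) (by rintro v ⟨q, hq, rfl⟩; exact le_trans (hFa hq) (le_max_left _ _))

lemma rsup_le {F : (Fin N → ℝ) → ℝ} (hFa : Antitone F) {p q : Fin N → ℝ} (hqp : q ≤ p) :
    Rsup H F p ≤ max (F q) (Hmax H q) :=
  csInf_le (rsupSet_bddBelow H hFa p) ⟨q, hqp, rfl⟩

lemma rsup_exists_lt {F : (Fin N → ℝ) → ℝ} {p : Fin N → ℝ} {b : ℝ} (h : Rsup H F p < b) :
    ∃ q, q ≤ p ∧ max (F q) (Hmax H q) < b := by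
  obtain ⟨v, ⟨q, hq, rfl⟩, hv⟩ := exists_lt_of_csInf_lt (rsupSet_nonempty H F p) h
  exact ⟨q, hq, hv⟩


variable {N : ℕ} [Nonempty (Fin N)] (H : Fin N → ℝ → ℝ)

lemma exists_superChar (hHcont : ∀ α, Continuous (H α)) (hHcoer : ∀ α, CoerciveHam (H α))
    {F : (Fin N → ℝ) → ℝ} (hFa : Antitone F) (hFc : Continuous F)
    (hfix : ∀ p, F p = Rsup H F p)
    {w : Fin N → ℝ} {lam : ℝ} (hw : ∀ α, lam < H α (w α)) (hFw : F w < lam) :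
    ∃ ps, ps ≤ w ∧ SuperChar H F ps ∧ F ps ≤ lam := by
  set T : Set ℝ := {μ | μ ≤ lam ∧ ∃ v, v ≤ w ∧ F v ≤ μ ∧ ∀ α, H α (v α) ≤ μ} with hT
  have hlamT : lam ∈ T := by
    have h1 : Rsup H F w < lam := by rw [← hfix w]; exact hFw
    obtain ⟨u, huw, hu⟩ := rsup_exists_lt H h1
    exact ⟨le_rfl, u, huw, (le_max_left _ _).trans hu.le,
      fun α => ((le_hmax H u α).trans (le_max_right _ _)).trans hu.le⟩
  have hTne : T.Nonempty := ⟨lam, hlamT⟩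
  have hTbdd : BddBelow T := ⟨F w, by rintro μ ⟨h1, v, h2, h3, h4⟩; exact (hFa h2).trans h3⟩
  set m := sInf T with hm
  have hmlam : m ≤ lam := csInf_le hTbdd hlamT
  set c : ℝ := (lam - m)/2 with hc
  have hc0 : 0 ≤ c := by rw [hc]; linarith
  set ν : ℕ → ℝ := fun n => m + min (1/((n:ℝ)+1)) c with hν
  have hνpos : ∀ n : ℕ, (0:ℝ) < 1/((n:ℝ)+1) := fun n => by positivity
  have hνm : ∀ n, m ≤ ν n := fun n => le_add_of_nonneg_right (le_min (hνpos n).le hc0)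
  have hνlam : ∀ n, ν n ≤ lam := by
    intro n
    have h1 : min (1/((n:ℝ)+1)) c ≤ c := min_le_right _ _
    calc ν n ≤ m + c := add_le_add_right h1 m
      _ = (m + lam)/2 := by rw [hc]; ring
      _ ≤ lam := by linarith
  have hνanti : ∀ a b : ℕ, a ≤ b → ν b ≤ ν a := by
    intro a b hab
    have h1 : (1:ℝ)/((b:ℝ)+1) ≤ 1/((a:ℝ)+1) :=
      one_div_le_one_div_of_le (by positivity) (add_le_add_left (Nat.cast_le.mpr hab) 1)
    exact add_le_add_right (min_le_min h1 le_rfl) m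
  have hνtend : Tendsto ν atTop (𝓝 m) := by
    have h1 : Tendsto (fun n : ℕ => min (1/((n:ℝ)+1)) c) atTop (𝓝 0) :=
      tendsto_of_tendsto_of_tendsto_of_le_of_le tendsto_const_nhds
        tendsto_one_div_add_atTop_nhds_zero_nat
        (fun n => le_min (hνpos n).le hc0) (fun n => min_le_left _ _)
    have h2 : Tendsto (fun n : ℕ => m + min (1/((n:ℝ)+1)) c) atTop (𝓝 (m + 0)) :=
      tendsto_const_nhds.add h1
    rw [add_zero] at h2
    exact h2
  have hνT : ∀ n, ν n ∈ T := by
    intro n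
    rcases eq_or_lt_of_le hmlam with heq | hlt
    · have hceq : c = 0 := by rw [hc, ← heq]; ring
      have hνeq : ν n = lam := by
        rw [hν]; simp only [hceq]
        rw [min_eq_right (hνpos n).le, add_zero, heq]
      rw [hνeq]; exact hlamT
    · have hgt : m < ν n := lt_add_of_pos_right _ (lt_min (hνpos n) (by rw [hc]; linarith))
      obtain ⟨μ, hμT, hμlt⟩ := exists_lt_of_csInf_lt hTne hgt
      obtain ⟨h1, v, h2, h3, h4⟩ := hμT
      exact ⟨hνlam n, v, h2, h3.trans hμlt.le, fun α => (h4 α).trans hμlt.le⟩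
  choose v hv1 hv2 hv3 using fun n => (hνT n).2
  choose z hz1 hz2 hz3 hz4 hz5 using fun n (α : Fin N) =>
    exists_tHit (hHcont α) ⟨v n α, hv1 n α, hv3 n α⟩
  have hzw : ∀ n α, z n α < w α := fun n α =>
    lt_of_le_of_ne (hz1 n α) (fun he => absurd (hz2 n α)
      (not_le.mpr (by rw [he]; exact (hνlam n).trans_lt (hw α))))
  have hzeq : ∀ n α, H α (z n α) = ν n := fun n α => hz4 n α (hzw n α)
  have hvz : ∀ n, v n ≤ z n := fun n α => hz3 n α (v n α) (hv1 n α) (hv3 n α)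
  have hFz : ∀ n, F (z n) ≤ ν n := fun n => (hFa (hvz n)).trans (hv2 n)
  have hzanti : ∀ α, Antitone fun n => z n α := fun α a b hab =>
    hz3 a α (z b α) (hz1 b α) (by rw [hzeq b α]; exact hνanti a b hab)
  choose B hB using fun α => coercive_lb (hHcoer α) lam
  have hzbdd : ∀ α, BddBelow (Set.range fun n => z n α) := fun α =>
    ⟨B α, by rintro _ ⟨n, rfl⟩; exact hB α _ ((hzeq n α).le.trans (hνlam n))⟩
  set zh : Fin N → ℝ := fun α => ⨅ n, z n α with hzh
  have hztend : ∀ α, Tendsto (fun n => z n α) atTop (𝓝 (zh α)) := fun α =>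
    tendsto_atTop_ciInf (hzanti α) (hzbdd α)
  have hzhw : zh ≤ w := fun α => (ciInf_le (hzbdd α) 0).trans (hz1 0 α)
  have hzheq : ∀ α, H α (zh α) = m := by
    intro α
    have h1 : Tendsto (fun n => H α (z n α)) atTop (𝓝 (H α (zh α))) :=
      ((hHcont α).tendsto _).comp (hztend α)
    have h2 : (fun n => H α (z n α)) = ν := funext fun n => hzeq n α
    rw [h2] at h1
    exact tendsto_nhds_unique h1 hνtend
  have hztendpi : Tendsto z atTop (𝓝 zh) := tendsto_pi_nhds.mpr hztend
  have hFzh : F zh ≤ m := le_of_tendsto_of_tendsto' ((hFc.tendsto _).comp hztendpi) hνtend hFz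
  have hFeq : F zh = m := by
    refine le_antisymm hFzh ?_
    by_contra hlt; push_neg at hlt
    have h1 : Rsup H F zh < m := by rw [← hfix zh]; exact hlt
    obtain ⟨u, huz, hu⟩ := rsup_exists_lt H h1
    have hμT : max (F u) (Hmax H u) ∈ T := ⟨hu.le.trans hmlam, u, huz.trans hzhw,
      le_max_left _ _, fun α => (le_hmax H u α).trans (le_max_right _ _)⟩
    exact absurd (csInf_le hTbdd hμT) (not_le.mpr hu)
  have hstrict : ∀ α y, zh α < y → y ≤ w α → m < H α y := by
    intro α y h1 h2
    obtain ⟨n, hn⟩ := exists_lt_of_ciInf_lt h1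
    exact (hνm n).trans_lt (hz5 n α y hn h2)
  obtain ⟨β, hβ⟩ := Finite.exists_min fun α => w α - zh α
  have hzhlt : ∀ α, zh α < w α := fun α =>
    lt_of_le_of_ne (hzhw α) (fun he => absurd (hzheq α)
      (by rw [he]; exact ne_of_gt (hmlam.trans_lt (hw α))))
  have hεpos : 0 < w β - zh β := sub_pos.mpr (hzhlt β)
  refine ⟨zh, hzhw, ⟨w β - zh β, hεpos, fun α =>
    ⟨(hzheq α).trans hFeq.symm, fun qq h1 h2 => ?_⟩⟩, hFeq.le.trans hmlam⟩
  have h3 : qq ≤ w α := by have := hβ α; linarith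
  rw [hzheq α]
  exact hstrict α qq h1 h3

lemma exists_subChar (hHcont : ∀ α, Continuous (H α)) (hHcoer : ∀ α, CoerciveHam (H α))
    {F : (Fin N → ℝ) → ℝ} (hFa : Antitone F) (hFc : Continuous F)
    (hfix : ∀ p, F p = Rsub H F p)
    {r : Fin N → ℝ} {lam : ℝ} (hr : ∀ α, H α (r α) < lam) (hFr : lam < F r) :
    ∃ ps, r ≤ ps ∧ SubChar H F ps ∧ lam ≤ F ps := by
  set T : Set ℝ := {μ | lam ≤ μ ∧ ∃ v, r ≤ v ∧ μ ≤ F v ∧ ∀ α, μ ≤ H α (v α)} with hT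
  have hlamT : lam ∈ T := by
    have h1 : lam < Rsub H F r := by rw [← hfix r]; exact hFr
    obtain ⟨u, hru, hu⟩ := rsub_exists_gt H h1
    exact ⟨le_rfl, u, hru, hu.le.trans (min_le_left _ _),
      fun α => hu.le.trans ((min_le_right _ _).trans (hmin_le H u α))⟩
  have hTne : T.Nonempty := ⟨lam, hlamT⟩
  have hTbdd : BddAbove T := ⟨F r, by rintro μ ⟨h1, v, h2, h3, h4⟩; exact h3.trans (hFa h2)⟩
  set m := sSup T with hm
  have hlamm : lam ≤ m := le_csSup hTbdd hlamT
  set c : ℝ := (m - lam)/2 with hc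
  have hc0 : 0 ≤ c := by rw [hc]; linarith
  set ν : ℕ → ℝ := fun n => m - min (1/((n:ℝ)+1)) c with hν
  have hνpos : ∀ n : ℕ, (0:ℝ) < 1/((n:ℝ)+1) := fun n => by positivity
  have hνm : ∀ n, ν n ≤ m := fun n => sub_le_self _ (le_min (hνpos n).le hc0)
  have hνlam : ∀ n, lam ≤ ν n := by
    intro n
    have h1 : min (1/((n:ℝ)+1)) c ≤ c := min_le_right _ _
    calc lam ≤ (m + lam)/2 := by linarith
      _ = m - c := by rw [hc]; ring
      _ ≤ ν n := sub_le_sub_left h1 m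
  have hνmono : ∀ a b : ℕ, a ≤ b → ν a ≤ ν b := by
    intro a b hab
    have h1 : (1:ℝ)/((b:ℝ)+1) ≤ 1/((a:ℝ)+1) :=
      one_div_le_one_div_of_le (by positivity) (add_le_add_left (Nat.cast_le.mpr hab) 1)
    exact sub_le_sub_left (min_le_min h1 le_rfl) m
  have hνtend : Tendsto ν atTop (𝓝 m) := by
    have h1 : Tendsto (fun n : ℕ => min (1/((n:ℝ)+1)) c) atTop (𝓝 0) :=
      tendsto_of_tendsto_of_tendsto_of_le_of_le tendsto_const_nhds
        tendsto_one_div_add_atTop_nhds_zero_nat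
        (fun n => le_min (hνpos n).le hc0) (fun n => min_le_left _ _)
    have h2 : Tendsto (fun n : ℕ => m - min (1/((n:ℝ)+1)) c) atTop (𝓝 (m - 0)) :=
      tendsto_const_nhds.sub h1
    rw [sub_zero] at h2
    exact h2
  have hνT : ∀ n, ν n ∈ T := by
    intro n
    rcases eq_or_lt_of_le hlamm with heq | hlt
    · have hceq : c = 0 := by rw [hc, ← heq]; ring
      have hνeq : ν n = lam := by
        rw [hν]; simp only [hceq]
        rw [min_eq_right (hνpos n).le, sub_zero, ← heq]
      rw [hνeq]; exact hlamT
    · have hgt : ν n < m := by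
        have : 0 < min (1/((n:ℝ)+1)) c := lt_min (hνpos n) (by rw [hc]; linarith)
        rw [hν]; simp only []; linarith
      obtain ⟨μ, hμT, hμlt⟩ := exists_lt_of_lt_csSup hTne hgt
      obtain ⟨h1, v, h2, h3, h4⟩ := hμT
      exact ⟨hνlam n, v, h2, hμlt.le.trans h3, fun α => hμlt.le.trans (h4 α)⟩
  choose v hv1 hv2 hv3 using fun n => (hνT n).2
  choose z hz1 hz2 hz3 hz4 using fun n (α : Fin N) =>
    exists_sHit (hHcont α) (hHcoer α) (r α) (ν n)
  have hrz : ∀ n α, r α < z n α := fun n α =>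
    lt_of_le_of_ne (hz1 n α) (fun he => absurd (hz2 n α)
      (not_le.mpr (by rw [← he]; exact (hr α).trans_le (hνlam n))))
  have hzeq : ∀ n α, H α (z n α) = ν n := fun n α => hz4 n α (hrz n α)
  have hzv : ∀ n, z n ≤ v n := fun n α => hz3 n α (v n α) (hv1 n α) (hv3 n α)
  have hFz : ∀ n, ν n ≤ F (z n) := fun n => (hv2 n).trans (hFa (hzv n))
  have hzmono : ∀ α, Monotone fun n => z n α := fun α a b hab =>
    hz3 a α (z b α) (hz1 b α) ((hνmono a b hab).trans (hz2 b α))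
  choose ζ hζ1 hζ2 hζ3 hζ4 using fun α => exists_sHit (hHcont α) (hHcoer α) (r α) m
  have hzbdd : ∀ α, BddAbove (Set.range fun n => z n α) := fun α =>
    ⟨ζ α, by rintro _ ⟨n, rfl⟩; exact hz3 n α (ζ α) (hζ1 α) ((hνm n).trans (hζ2 α))⟩
  set zh : Fin N → ℝ := fun α => ⨆ n, z n α with hzh
  have hztend : ∀ α, Tendsto (fun n => z n α) atTop (𝓝 (zh α)) := fun α =>
    tendsto_atTop_ciSup (hzmono α) (hzbdd α)
  have hrzh : r ≤ zh := fun α => (hz1 0 α).trans (le_ciSup (hzbdd α) 0)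
  have hzheq : ∀ α, H α (zh α) = m := by
    intro α
    have h1 : Tendsto (fun n => H α (z n α)) atTop (𝓝 (H α (zh α))) :=
      ((hHcont α).tendsto _).comp (hztend α)
    have h2 : (fun n => H α (z n α)) = ν := funext fun n => hzeq n α
    rw [h2] at h1
    exact tendsto_nhds_unique h1 hνtend
  have hztendpi : Tendsto z atTop (𝓝 zh) := tendsto_pi_nhds.mpr hztend
  have hFzh : m ≤ F zh := le_of_tendsto_of_tendsto' hνtend ((hFc.tendsto _).comp hztendpi) hFz
  have hFeq : F zh = m := by
    refine le_antisymm ?_ hFzh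
    by_contra hlt; push_neg at hlt
    have h1 : m < Rsub H F zh := by rw [← hfix zh]; exact hlt
    obtain ⟨u, hzu, hu⟩ := rsub_exists_gt H h1
    have hμT : min (F u) (Hmin H u) ∈ T := ⟨hlamm.trans hu.le, u, hrzh.trans hzu,
      min_le_left _ _, fun α => (min_le_right _ _).trans (hmin_le H u α)⟩
    exact absurd (le_csSup hTbdd hμT) (not_le.mpr hu)
  have hstrict : ∀ α y, r α ≤ y → y < zh α → H α y < m := by
    intro α y h1 h2
    obtain ⟨n, hn⟩ := exists_lt_of_lt_ciSup h2
    have h3 : H α y < ν n := by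
      by_contra hcon; push_neg at hcon
      exact absurd (hz3 n α y h1 hcon) (not_le.mpr hn)
    exact h3.trans_le (hνm n)
  obtain ⟨β, hβ⟩ := Finite.exists_min fun α => zh α - r α
  have hrzhlt : ∀ α, r α < zh α := fun α =>
    lt_of_le_of_ne (hrzh α) (fun he => absurd (hzheq α)
      (by rw [← he]; exact ne_of_lt ((hr α).trans_le hlamm)))
  have hεpos : 0 < zh β - r β := sub_pos.mpr (hrzhlt β)
  refine ⟨zh, hrzh, ⟨zh β - r β, hεpos, fun α =>
    ⟨(hzheq α).trans hFeq.symm, fun qq h1 h2 => ?_⟩⟩, hlamm.trans hFeq.ge⟩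
  have h3 : r α ≤ qq := by have := hβ α; linarith
  rw [hzheq α]
  exact hstrict α qq h3 h2


lemma rsup_idem {G F : (Fin N → ℝ) → ℝ} (hGa : Antitone G) (hFa : Antitone F)
    (hF : ∀ p, F p = Rsup H G p) : ∀ p, F p = Rsup H F p := by
  intro p
  refine le_antisymm (le_rsup H hFa p) (le_of_forall_pos_le_add fun ε hε => ?_)
  have h1 : Rsup H G p < F p + ε := by rw [← hF p]; linarith
  obtain ⟨u, hup, hu⟩ := rsup_exists_lt H h1
  have h2 : F u ≤ max (G u) (Hmax H u) := by rw [hF u]; exact rsup_le H hGa (le_refl u)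
  have h3 : Rsup H F p ≤ max (F u) (Hmax H u) := rsup_le H hFa hup
  have h4 : max (F u) (Hmax H u) ≤ max (G u) (Hmax H u) := max_le h2 (le_max_right _ _)
  linarith [lt_of_le_of_lt (h3.trans h4) hu]

lemma rsub_fixed (hHcont : ∀ α, Continuous (H α)) (hHcoer : ∀ α, CoerciveHam (H α))
    {F0 F : (Fin N → ℝ) → ℝ} (hF0a : Antitone F0) (hFa : Antitone F)
    (hF : ∀ p, F p = Rsup H (Rsub H F0) p) : ∀ p, F p = Rsub H F p := by
  intro p
  have hGa : Antitone (Rsub H F0) := rsub_antitone H hF0a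
  refine le_antisymm (le_of_forall_pos_le_add fun ε hε => ?_) (rsub_le H hFa p)
  set lam := F p - ε with hlam
  choose q hq1 hq2 hq3 hq4 using fun α => exists_sHit (hHcont α) (hHcoer α) (p α) lam
  have hpq : p ≤ q := hq1
  have hFq : lam ≤ F q := by
    rw [hF q]
    refine le_csInf (rsupSet_nonempty H _ q) ?_
    rintro b ⟨rr, hrrq, rfl⟩
    by_contra hb
    push_neg at hb
    have hGrr : Rsub H F0 rr < lam := lt_of_le_of_lt (le_max_left _ _) hb
    have hrrh : ∀ α, H α (rr α) < lam := fun α =>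
      lt_of_le_of_lt ((le_hmax H rr α).trans (le_max_right _ _)) hb
    set r' : Fin N → ℝ := fun α => min (rr α) (p α) with hr'
    have hr'p : r' ≤ p := fun α => min_le_right _ _
    have hph : ∀ α, p α ≤ rr α → H α (p α) < lam := by
      intro α hpa
      by_contra hcon; push_neg at hcon
      have h5 : q α ≤ p α := hq3 α (p α) le_rfl hcon
      have h6 : rr α = p α := le_antisymm ((hrrq α).trans h5) hpa
      rw [← h6] at hcon
      exact absurd hcon (not_le.mpr (hrrh α))
    have hr'h : ∀ α, H α (r' α) < lam := by
      intro α
      rcases le_total (rr α) (p α) with hle | hle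
      · have : r' α = rr α := min_eq_left hle
        rw [this]; exact hrrh α
      · have : r' α = p α := min_eq_right hle
        rw [this]; exact hph α hle
    rcases le_or_gt (Rsub H F0 r') lam with hG' | hG'
    · have h7 : F p ≤ max (Rsub H F0 r') (Hmax H r') := by rw [hF p]; exact rsup_le H hGa hr'p
      have h8 : Hmax H r' ≤ lam := hmax_le H fun α => (hr'h α).le
      have h9 : F p ≤ lam := h7.trans (max_le hG' h8)
      rw [hlam] at h9; linarith
    · obtain ⟨u, hr'u, hu⟩ := rsub_exists_gt H hG'
      have huh : ∀ α, lam ≤ H α (u α) := fun α =>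
        (lt_of_lt_of_le hu ((min_le_right _ _).trans (hmin_le H u α))).le
      choose zz hz1 hz2 hz3 hz4 using fun α =>
        exists_sHit (hHcont α) (hHcoer α) (r' α) lam
      have hzu : ∀ α, zz α ≤ u α := fun α => hz3 α (u α) (hr'u α) (huh α)
      have hGz : lam < Rsub H F0 zz :=
        calc lam < min (F0 u) (Hmin H u) := hu
        _ ≤ Rsub H F0 u := le_rsub H hF0a (le_refl u)
        _ ≤ Rsub H F0 zz := hGa (fun α => hzu α)
      have hrrz : rr ≤ zz := by
        intro α
        rcases le_total (rr α) (p α) with hle | hle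
        · have h9 : r' α = rr α := min_eq_left hle
          rw [← h9]; exact hz1 α
        · have h9 : r' α = p α := min_eq_right hle
          have h10 : q α ≤ zz α := by
            refine hq3 α (zz α) ?_ (hz2 α)
            rw [← h9]; exact hz1 α
          exact (hrrq α).trans h10
      exact absurd (hGa hrrz) (not_le.mpr (lt_trans hGrr hGz))
  have hHq : lam ≤ Hmin H q := le_hmin H fun α => hq2 α
  have h11 : lam ≤ Rsub H F p := le_trans (le_min hFq hHq) (le_rsub H hFa hpq)
  rw [hlam] at h11; linarith

lemma forward_b (hHcont : ∀ α, Continuous (H α))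
    {F0 F : (Fin N → ℝ) → ℝ} (hF0c : Continuous F0) (hF0a : Antitone F0) (hFa : Antitone F)
    (hF : ∀ p, F p = Rsup H (Rsub H F0) p) :
    ∀ p, SuperChar H F p → F0 p ≤ F p := by
  rintro p ⟨ε, hε, hch⟩
  by_contra hcon; push_neg at hcon
  have hGa := rsub_antitone H hF0a
  set φ : ℝ → ℝ := fun t => F0 (fun α => p α + t) with hφ
  have hφc : Continuous φ := hF0c.comp (continuous_pi fun α => continuous_const.add continuous_id)
  have hopen : IsOpen (φ ⁻¹' Ioi (F p)) := isOpen_Ioi.preimage hφc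
  have h0 : (0:ℝ) ∈ φ ⁻¹' Ioi (F p) := by
    simp only [hφ, Set.mem_preimage, Set.mem_Ioi, add_zero]
    exact hcon
  obtain ⟨δ, hδ, hball⟩ := Metric.isOpen_iff.mp hopen 0 h0
  set t := min (ε/2) (δ/2) with ht
  have ht0 : 0 < t := lt_min (by linarith) (by linarith)
  set w : Fin N → ℝ := fun α => p α + t with hw
  have hpw : p ≤ w := fun α => le_add_of_nonneg_right ht0.le
  have hwh : ∀ α, F p < H α (w α) := by
    intro α
    have htε : t < ε := lt_of_le_of_lt (min_le_left _ _) (by linarith)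
    have h1 := (hch α).2 (p α + t) (by linarith) (by linarith)
    rw [(hch α).1] at h1
    exact h1
  have hmemball : t ∈ Metric.ball (0:ℝ) δ := by
    rw [Metric.mem_ball, Real.dist_eq, sub_zero, abs_of_pos ht0]
    exact lt_of_le_of_lt (min_le_right _ _) (by linarith)
  have hF0w : F p < φ t := hball hmemball
  have helt : F p < min (F0 w) (Hmin H w) := lt_min hF0w (lt_hmin H hwh)
  have h1 : min (F0 w) (Hmin H w) ≤ Rsub H F0 p := le_rsub H hF0a hpw
  have h2 : Rsub H F0 p ≤ F p := by rw [hF p]; exact le_rsup H hGa p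
  linarith

lemma forward_c (hHcont : ∀ α, Continuous (H α))
    {F0 F : (Fin N → ℝ) → ℝ} (hF0c : Continuous F0) (hF0a : Antitone F0) (hFa : Antitone F)
    (hF : ∀ p, F p = Rsup H (Rsub H F0) p) :
    ∀ p, SubChar H F p → F p ≤ F0 p := by
  rintro p ⟨ε, hε, hch⟩
  by_contra hcon; push_neg at hcon
  have hGa := rsub_antitone H hF0a
  set φ : ℝ → ℝ := fun t => F0 (fun α => p α - t) with hφ
  have hφc : Continuous φ := hF0c.comp (continuous_pi fun α => continuous_const.sub continuous_id)
  have hopen : IsOpen (φ ⁻¹' Iio (F p)) := isOpen_Iio.preimage hφc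
  have h0 : (0:ℝ) ∈ φ ⁻¹' Iio (F p) := by
    simp only [hφ, Set.mem_preimage, Set.mem_Iio, sub_zero]
    exact hcon
  obtain ⟨δ, hδ, hball⟩ := Metric.isOpen_iff.mp hopen 0 h0
  set t := min (ε/2) (δ/2) with ht
  have ht0 : 0 < t := lt_min (by linarith) (by linarith)
  set r : Fin N → ℝ := fun α => p α - t with hr
  have hrp : r ≤ p := fun α => sub_le_self _ ht0.le
  have hrh : ∀ α, H α (r α) < F p := by
    intro α
    have htε : t < ε := lt_of_le_of_lt (min_le_left _ _) (by linarith)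
    have h1 := (hch α).2 (p α - t) (by linarith) (by linarith)
    rw [(hch α).1] at h1
    exact h1
  have hmemball : t ∈ Metric.ball (0:ℝ) δ := by
    rw [Metric.mem_ball, Real.dist_eq, sub_zero, abs_of_pos ht0]
    exact lt_of_le_of_lt (min_le_right _ _) (by linarith)
  have hF0r : φ t < F p := hball hmemball
  have hGr : Rsub H F0 r ≤ F0 r := rsub_le H hF0a r
  have h1 : F p ≤ max (Rsub H F0 r) (Hmax H r) := by rw [hF p]; exact rsup_le H hGa hrp
  have h2 : max (Rsub H F0 r) (Hmax H r) < F p :=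
    max_lt (lt_of_le_of_lt hGr hF0r) (hmax_lt H hrh)
  linarith


lemma backward_I (hHcont : ∀ α, Continuous (H α)) (hHcoer : ∀ α, CoerciveHam (H α))
    {F0 F : (Fin N → ℝ) → ℝ} (hF0a : Antitone F0) (hFa : Antitone F) (hFc : Continuous F)
    (hfixsub : ∀ p, F p = Rsub H F p)
    (hsc : ∀ p, SubChar H F p → F p ≤ F0 p) :
    ∀ v, F v ≤ max (Rsub H F0 v) (Hmax H v) := by
  intro v; by_contra hcon; push_neg at hcon
  set lam := (max (Rsub H F0 v) (Hmax H v) + F v)/2 with hlam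
  have h1 : max (Rsub H F0 v) (Hmax H v) < lam := by rw [hlam]; linarith
  have h2 : lam < F v := by rw [hlam]; linarith
  have hvh : ∀ α, H α (v α) < lam := fun α =>
    lt_of_le_of_lt ((le_hmax H v α).trans (le_max_right _ _)) h1
  obtain ⟨ps, hvp, hsub, hlamF⟩ :=
    exists_subChar H hHcont hHcoer hFa hFc hfixsub hvh h2
  obtain ⟨ε, hε, hch⟩ := hsub
  have hF0 : F ps ≤ F0 ps := hsc ps ⟨ε, hε, hch⟩
  have hHm : Hmin H ps = F ps := hmin_eq H (fun α => (hch α).1)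
  have h3 : lam ≤ min (F0 ps) (Hmin H ps) := le_min (hlamF.trans hF0) (by rw [hHm]; exact hlamF)
  have h4 : lam ≤ Rsub H F0 v := h3.trans (le_rsub H hF0a hvp)
  have h5 : Rsub H F0 v ≤ max (Rsub H F0 v) (Hmax H v) := le_max_left _ _
  linarith

lemma backward_II (hHcont : ∀ α, Continuous (H α)) (hHcoer : ∀ α, CoerciveHam (H α))
    {F0 F : (Fin N → ℝ) → ℝ} (hF0a : Antitone F0) (hFa : Antitone F) (hFc : Continuous F)
    (hfixsup : ∀ p, F p = Rsup H F p)
    (hbc : ∀ p, SuperChar H F p → F0 p ≤ F p) :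
    ∀ v, Rsub H F0 v ≤ max (F v) (Hmax H v) := by
  intro v; by_contra hcon; push_neg at hcon
  set lam := (max (F v) (Hmax H v) + Rsub H F0 v)/2 with hlam
  have h1 : max (F v) (Hmax H v) < lam := by rw [hlam]; linarith
  have h2 : lam < Rsub H F0 v := by rw [hlam]; linarith
  obtain ⟨u, hvu, hu⟩ := rsub_exists_gt H h2
  have hFu : F u < lam := lt_of_le_of_lt ((hFa hvu).trans (le_max_left _ _)) h1
  have huh : ∀ α, lam < H α (u α) := fun α =>
    lt_of_lt_of_le hu ((min_le_right _ _).trans (hmin_le H u α))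
  obtain ⟨ps, hpu, hsuper, hFps⟩ :=
    exists_superChar H hHcont hHcoer hFa hFc hfixsup huh hFu
  have h3 : F0 ps ≤ F ps := hbc ps hsuper
  have h4 : F0 u ≤ F0 ps := hF0a hpu
  have h5 : lam < F0 u := lt_of_lt_of_le hu (min_le_left _ _)
  linarith

end EffJ

theorem characterization_of_effective_junction_conditions
    (N : ℕ) (hN : 1 ≤ N)
    (H : Fin N → ℝ → ℝ)
    (hHcont : ∀ α, Continuous (H α))
    (hHcoer : ∀ α, CoerciveHam (H α))
    (F0 : (Fin N → ℝ) → ℝ)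
    (hF0cont : Continuous F0)
    (hF0mono : Antitone F0)
    (F : (Fin N → ℝ) → ℝ)
    (hFcont : Continuous F)
    (hFmono : Antitone F) :
    (∀ p : Fin N → ℝ, F p = Rsup H (Rsub H F0) p) ↔
      ((∀ p : Fin N → ℝ, F p = Rsub H F p ∧ F p = Rsup H F p) ∧
        (∀ p : Fin N → ℝ, SuperChar H F p → F0 p ≤ F p) ∧
        (∀ p : Fin N → ℝ, SubChar H F p → F p ≤ F0 p)) := by
  haveI : Nonempty (Fin N) := ⟨⟨0, hN⟩⟩
  constructor
  · intro hF
    exact ⟨fun p => ⟨EffJ.rsub_fixed H hHcont hHcoer hF0mono hFmono hF p,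
        EffJ.rsup_idem H (EffJ.rsub_antitone H hF0mono) hFmono hF p⟩,
      EffJ.forward_b H hHcont hF0cont hF0mono hFmono hF,
      EffJ.forward_c H hHcont hF0cont hF0mono hFmono hF⟩
  · rintro ⟨ha, hb, hc⟩ p
    have hI := EffJ.backward_I H hHcont hHcoer hF0mono hFmono hFcont (fun p => (ha p).1) hc
    have hII := EffJ.backward_II H hHcont hHcoer hF0mono hFmono hFcont (fun p => (ha p).2) hb
    have hset : {v : ℝ | ∃ q, q ≤ p ∧ v = max (F q) (Hmax H q)} =
        {v : ℝ | ∃ q, q ≤ p ∧ v = max (Rsub H F0 q) (Hmax H q)} := by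
      have heq : ∀ q, max (F q) (Hmax H q) = max (Rsub H F0 q) (Hmax H q) := fun q =>
        le_antisymm (max_le (hI q) (le_max_right _ _)) (max_le (hII q) (le_max_right _ _))
      ext b
      constructor
      · rintro ⟨q, hq, rfl⟩; exact ⟨q, hq, heq q⟩
      · rintro ⟨q, hq, rfl⟩; exact ⟨q, hq, (heq q).symm⟩
    calc F p = Rsup H F p := (ha p).2
      _ = Rsup H (Rsub H F0) p := by unfold Rsup; rw [hset]
end
end
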